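/- arXiv:0809.2124 — 9 statements merged into one kernel-verified Lean document; each statement's English description precedes it below -/
import Mathlib

section
/- Let S be a set and M : S × S → ℂ a positive semidefinite function, i.e. ∑_{s∈S} ∑_{t∈S} conj(c_s) M(s,t) c_t ≥ 0 for every finitely supported family (c_s)_{s∈S} of complex numbers. Then there exist a complex Hilbert space H and a map X : S → H such that the closed linear span of {X(s) : s ∈ S} is all of H and M(s,t) = ⟨X(s), X(t)⟩_H for all s,t ∈ S. Moreover the pair (H, X) is unique up to unitary equivalence: if (H₁, X₁) and (H₂, X₂) both satisfy these conditions, then there is a unitary map W : H₁ → H₂ with W(X₁(s)) = X₂(s) for all s ∈ S. -/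
/-!
Over `ℂ` a nonnegative quadratic form is real, which forces `M` to be Hermitian; so `M` is a
positive semidefinite matrix and the reproducing kernel Hilbert space of the scalar kernel
`s t ↦ M s t • id` realises it through its kernel functions at `1`. For uniqueness, the maps
`c ↦ ∑ c s • Xᵢ s` on finitely supported families have norms computed from `M` alone, so the
identity on families extends by continuity to a unitary `H₁ → H₂`.
-/

open scoped InnerProductSpace ComplexConjugate ComplexOrder
open Submodule Set

namespace Matrix

variable {n : Type*}

theorem finsuppSum_single_add_single {R : Type*} [Ring R] [StarRing R] (M : Matrix n n R)
    (i j : n) (a b : R) :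
    ((Finsupp.single i a + Finsupp.single j b).sum fun k xk ↦
        (Finsupp.single i a + Finsupp.single j b).sum fun l xl ↦ star xk * M k l * xl) =
      star a * M i i * a + star a * M i j * b + star b * M j i * a + star b * M j j * b := by
  simp only [Finsupp.sum_add_index', Finsupp.sum_single_index, Finsupp.sum_add, star_add,
    star_zero, mul_add, add_mul, mul_zero, zero_mul, implies_true]
  abel

theorem IsHermitian.of_finsuppSum_nonneg {M : Matrix n n ℂ}
    (h : ∀ x : n →₀ ℂ, 0 ≤ x.sum fun i xi ↦ x.sum fun j xj ↦ star xi * M i j * xj) :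
    M.IsHermitian := by
  ext i j
  have him (a b : ℂ) := (Complex.nonneg_iff.mp (h (Finsupp.single j a + Finsupp.single i b))).2
  have h10 := him 1 0
  have h01 := him 0 1
  have h11 := him 1 1
  have h1I := him 1 Complex.I
  simp only [finsuppSum_single_add_single] at h10 h01 h11 h1I
  refine Complex.ext ?_ ?_ <;> simp at h10 h01 h11 h1I ⊢ <;> linarith

theorem PosSemidef.of_finsuppSum_nonneg {M : Matrix n n ℂ}
    (h : ∀ x : n →₀ ℂ, 0 ≤ x.sum fun i xi ↦ x.sum fun j xj ↦ star xi * M i j * xj) :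
    M.PosSemidef :=
  ⟨.of_finsuppSum_nonneg h, h⟩

noncomputable def toScalarKernel (M : Matrix n n ℂ) : Matrix n n (ℂ →L[ℂ] ℂ) :=
  M.map (algebraMap ℂ (ℂ →L[ℂ] ℂ))

theorem PosSemidef.toScalarKernel {M : Matrix n n ℂ} (hM : M.PosSemidef) :
    M.toScalarKernel.PosSemidef := by
  have hK : M.toScalarKernel.IsHermitian :=
    hM.isHermitian.map _ fun z ↦ algebraMap_star_comm z
  refine ((RKHS.posSemidef_tfae (K := M.toScalarKernel)).out 2 0).mp ?_
  refine ⟨hK, fun c ↦ ?_⟩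
  rw [RCLike.re_to_complex]
  refine (Complex.nonneg_iff.mp (hM.2 c)).1.trans_eq (congrArg Complex.re ?_)
  refine Finsupp.sum_congr fun i _ ↦ Finsupp.sum_congr fun j _ ↦ ?_
  simp [Matrix.toScalarKernel, ← hM.isHermitian.apply i j]
  ring

end Matrix

theorem RKHS.topologicalClosure_span_range_kerFun_one {𝕜 X H : Type*} [RCLike 𝕜]
    [NormedAddCommGroup H] [InnerProductSpace 𝕜 H] [CompleteSpace H] [RKHS 𝕜 H X 𝕜] :
    (span 𝕜 (range fun x ↦ kerFun H x 1)).topologicalClosure = ⊤ := by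
  refine top_le_iff.mp ((kerFun_dense H).ge.trans (topologicalClosure_mono ?_))
  refine span_le.mpr ?_
  rintro _ ⟨x, v, rfl⟩
  rw [← mul_one v, ← smul_eq_mul, map_smul]
  exact smul_mem _ _ (subset_span ⟨x, rfl⟩)

theorem Matrix.PosSemidef.exists_gram_eq {S : Type} {M : Matrix S S ℂ} (hM : M.PosSemidef) :
    ∃ (H : Type) (_ : NormedAddCommGroup H) (_ : InnerProductSpace ℂ H) (_ : CompleteSpace H)
      (X : S → H), (span ℂ (range X)).topologicalClosure = ⊤ ∧ gram ℂ X = M := by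
  have : Fact M.toScalarKernel.PosSemidef := ⟨hM.toScalarKernel⟩
  refine ⟨RKHS.OfKernel M.toScalarKernel, inferInstance, inferInstance, inferInstance,
    fun s ↦ RKHS.kerFun _ s 1, RKHS.topologicalClosure_span_range_kerFun_one, ?_⟩
  ext s t
  rw [gram_apply, ← RKHS.kernel_inner, RKHS.OfKernel.kernel_ofKernel]
  simp [Matrix.toScalarKernel, ← hM.isHermitian.apply s t]

theorem Finsupp.denseRange_linearCombination_iff {ι R M : Type*} [Semiring R]
    [AddCommMonoid M] [Module R M] [TopologicalSpace M] [ContinuousAdd M]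
    [ContinuousConstSMul R M] (v : ι → M) :
    DenseRange (linearCombination R v) ↔ (span R (range v)).topologicalClosure = ⊤ := by
  rw [← dense_iff_topologicalClosure_eq_top, ← range_linearCombination, LinearMap.coe_range]
  rfl

theorem Finsupp.inner_linearCombination_linearCombination {ι 𝕜 E : Type*} [RCLike 𝕜]
    [SeminormedAddCommGroup E] [InnerProductSpace 𝕜 E] (v : ι → E) (c d : ι →₀ 𝕜) :
    ⟪linearCombination 𝕜 v c, linearCombination 𝕜 v d⟫_𝕜 =
      c.sum fun i a ↦ d.sum fun j b ↦ conj a * ⟪v i, v j⟫_𝕜 * b := by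
  simp only [linearCombination_apply, Finsupp.sum_inner, Finsupp.inner_sum, inner_smul_left,
    inner_smul_right, Finsupp.mul_sum]
  rw [Finsupp.sum_comm]
  exact Finsupp.sum_congr fun i _ ↦ Finsupp.sum_congr fun j _ ↦ by ring

theorem exists_linearIsometryEquiv_of_inner_eq {ι 𝕜 E F : Type*} [RCLike 𝕜]
    [NormedAddCommGroup E] [InnerProductSpace 𝕜 E] [CompleteSpace E]
    [NormedAddCommGroup F] [InnerProductSpace 𝕜 F] [CompleteSpace F] {v : ι → E} {w : ι → F}
    (hv : (span 𝕜 (range v)).topologicalClosure = ⊤)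
    (hw : (span 𝕜 (range w)).topologicalClosure = ⊤)
    (h : ∀ i j, ⟪v i, v j⟫_𝕜 = ⟪w i, w j⟫_𝕜) :
    ∃ W : E ≃ₗᵢ[𝕜] F, ∀ i, W (v i) = w i := by
  rw [← Finsupp.denseRange_linearCombination_iff] at hv hw
  have hnorm (c : ι →₀ 𝕜) :
      ‖Finsupp.linearCombination 𝕜 w c‖ = ‖Finsupp.linearCombination 𝕜 v c‖ := by
    simp only [norm_eq_sqrt_re_inner (𝕜 := 𝕜), Finsupp.inner_linearCombination_linearCombination,
      h]
  refine ⟨(LinearEquiv.refl 𝕜 (ι →₀ 𝕜)).extendOfIsometry _ _ hv hw hnorm, fun i ↦ ?_⟩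
  simpa using (LinearEquiv.refl 𝕜 (ι →₀ 𝕜)).extendOfIsometry_eq _ _ hv hw hnorm
    (Finsupp.single i 1)

/-- **Parthasarathy–Schmidt / Kolmogorov realization theorem.** A positive semidefinite
function `M : S × S → ℂ` is realized as `M s t = ⟪X s, X t⟫` for a map `X : S → H`
into a complex Hilbert space `H` whose closed linear span of the range of `X` is all
of `H`; moreover the pair `(H, X)` is unique up to unitary equivalence. -/
theorem parthasarathy_schmidt_realization {S : Type} (M : S → S → ℂ)
    (hpos : ∀ c : S →₀ ℂ,
      0 ≤ ∑ s ∈ c.support, ∑ t ∈ c.support, (starRingEnd ℂ) (c s) * M s t * c t) :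
    (∃ (H : Type) (_ : NormedAddCommGroup H) (_ : InnerProductSpace ℂ H)
        (_ : CompleteSpace H) (X : S → H),
        (Submodule.span ℂ (Set.range X)).topologicalClosure = ⊤ ∧
        ∀ s t, M s t = (inner ℂ (X s) (X t) : ℂ)) ∧
    (∀ (H₁ : Type) (_ : NormedAddCommGroup H₁) (_ : InnerProductSpace ℂ H₁)
        (_ : CompleteSpace H₁) (X₁ : S → H₁)
        (H₂ : Type) (_ : NormedAddCommGroup H₂) (_ : InnerProductSpace ℂ H₂)
        (_ : CompleteSpace H₂) (X₂ : S → H₂),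
        (Submodule.span ℂ (Set.range X₁)).topologicalClosure = ⊤ →
        (∀ s t, M s t = (inner ℂ (X₁ s) (X₁ t) : ℂ)) →
        (Submodule.span ℂ (Set.range X₂)).topologicalClosure = ⊤ →
        (∀ s t, M s t = (inner ℂ (X₂ s) (X₂ t) : ℂ)) →
        ∃ W : H₁ ≃ₗᵢ[ℂ] H₂, ∀ s, W (X₁ s) = X₂ s) := by
  refine ⟨?_, fun H₁ _ _ _ X₁ H₂ _ _ _ X₂ hX₁ hM₁ hX₂ hM₂ ↦
    exists_linearIsometryEquiv_of_inner_eq hX₁ hX₂ fun s t ↦ (hM₁ s t).symm.trans (hM₂ s t)⟩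
  obtain ⟨H, _, _, hH, X, hX, hgram⟩ :=
    (Matrix.PosSemidef.of_finsuppSum_nonneg hpos).exists_gram_eq
  exact ⟨H, _, _, hH, X, hX, fun s t ↦ by rw [← hgram, Matrix.gram_apply]⟩
end

section
/- Let (τ_i)_{i∈I} be a finite family of contractive maps on ℝ (each τ_i is Lipschitz with Lipschitz constant r_i < 1) and let (p_i)_{i∈I} be strictly positive weights with ∑_{i∈I} p_i = 1. Let μ be the Hutchinson equilibrium measure, i.e. the Borel probability measure with compact support satisfying μ = ∑_{i∈I} p_i · (μ ∘ τ_i⁻¹). If ν is any Borel probability measure on ℝ whose support is contained in the support of μ and whose moment matrix is a fixed point of the moment transformation, i.e. ∫_ℝ x^n dν(x) = ∑_{i∈I} p_i ∫_ℝ (τ_i(x))^n dν(x) for all n ∈ ℕ, then ν = μ. -/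
/-!
A finite measure on `ℝ` with compact support is determined by its moments (Weierstrass
approximation on an interval containing the support), so the moment identity makes `ν` a fixed
point of the Hutchinson operator `ρ ↦ ∑ i, p i • ρ ∘ (τ i)⁻¹`, like `μ`. Two compactly supported
fixed points coincide: for an `L`-Lipschitz `f`, invariance rewrites `∫ f ∂ν - ∫ f ∂μ` as
`∑ i, p i * (∫ f ∘ τ i ∂ν - ∫ f ∘ τ i ∂μ)` with each `f ∘ τ i` being `c L`-Lipschitz,
`c = maxᵢ r i < 1`; iterating bounds the difference by `2 L R cⁿ → 0`, and bounded Lipschitz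
functions (thickened indicators of closed sets) separate finite Borel measures.
-/

open MeasureTheory Metric Filter Topology Function BoundedContinuousFunction
open scoped NNReal ENNReal Polynomial

section CompactSupport

variable {X : Type*} [MeasurableSpace X] {ρ : Measure X} {K : Set X}

theorem Continuous.integrable_of_measure_compl_eq_zero [TopologicalSpace X] [T2Space X]
    [OpensMeasurableSpace X] [IsFiniteMeasure ρ] {f : X → ℝ} (hf : Continuous f)
    (hK : IsCompact K) (hρK : ρ Kᶜ = 0) : Integrable f ρ := by
  rw [← Measure.restrict_eq_self_of_ae_mem (ae_iff.mpr hρK)]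
  exact hf.continuousOn.integrableOn_compact hK

theorem abs_integral_sub_integral_le_of_forall_mem [IsFiniteMeasure ρ] {f g : X → ℝ} {ε : ℝ}
    (hf : Integrable f ρ) (hg : Integrable g ρ) (hρK : ρ Kᶜ = 0)
    (hfg : ∀ x ∈ K, |f x - g x| ≤ ε) : |∫ x, f x ∂ρ - ∫ x, g x ∂ρ| ≤ ε * ρ.real Set.univ := by
  rw [← integral_sub hf hg]
  refine norm_integral_le_of_norm_le_const (f := fun x => f x - g x) ?_
  filter_upwards [ae_iff.mpr hρK] with x hx using hfg x hx

end CompactSupport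

theorem MeasureTheory.Measure.ext_of_forall_lipschitzWith_integral_eq {X : Type*}
    [PseudoEMetricSpace X] [MeasurableSpace X] [BorelSpace X] {μ ν : Measure X}
    [IsFiniteMeasure μ] [IsFiniteMeasure ν]
    (h : ∀ (L : ℝ≥0) (f : X → ℝ), LipschitzWith L f → ∫ x, f x ∂μ = ∫ x, f x ∂ν) : μ = ν := by
  have hclosed : ∀ F : Set X, IsClosed F → μ F = ν F := by
    intro F hF
    have hδ : ∀ n : ℕ, 0 < 1 / ((n : ℝ) + 1) := fun n => Nat.one_div_pos_of_nat
    have hlintegral : ∀ n, ∫⁻ x, (thickenedIndicator (hδ n) F x : ℝ≥0∞) ∂μ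
        = ∫⁻ x, (thickenedIndicator (hδ n) F x : ℝ≥0∞) ∂ν := by
      intro n
      refine (ENNReal.toReal_eq_toReal_iff' (lintegral_lt_top_of_nnreal μ _).ne
        (lintegral_lt_top_of_nnreal ν _).ne).mp ?_
      rw [toReal_lintegral_coe_eq_integral, toReal_lintegral_coe_eq_integral]
      exact h _ _ ((LipschitzWith.subtype_val _).comp (lipschitzWith_thickenedIndicator (hδ n) F))
    have hμF := tendsto_lintegral_thickenedIndicator_of_isClosed μ hF hδ
      tendsto_one_div_add_atTop_nhds_zero_nat
    have hνF := tendsto_lintegral_thickenedIndicator_of_isClosed ν hF hδ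
      tendsto_one_div_add_atTop_nhds_zero_nat
    simp_rw [hlintegral] at hμF
    exact tendsto_nhds_unique hμF hνF
  refine ext_of_generate_finite _ ?_ isPiSystem_isClosed hclosed (hclosed _ isClosed_univ)
  rw [BorelSpace.measurable_eq (α := X), borel_eq_generateFrom_isClosed]

noncomputable def hutchinsonOperator {X I : Type*} [MeasurableSpace X] [Fintype I]
    (τ : I → X → X) (p : I → ℝ) (ρ : Measure X) : Measure X :=
  ∑ i, ENNReal.ofReal (p i) • ρ.map (τ i)

namespace hutchinsonOperator

variable {X I : Type*} [MeasurableSpace X] [Fintype I] {τ : I → X → X} {p : I → ℝ}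
  {ρ : Measure X}

instance [IsFiniteMeasure ρ] : IsFiniteMeasure (hutchinsonOperator τ p ρ) where
  measure_univ_lt_top := by
    simp only [hutchinsonOperator, Measure.coe_finsetSum, Finset.sum_apply,
      Measure.smul_apply, smul_eq_mul]
    exact ENNReal.sum_lt_top.mpr fun i _ => ENNReal.mul_lt_top ENNReal.ofReal_lt_top
      (measure_lt_top _ _)

theorem apply_compl_eq_zero {K S : Set X} (hτ : ∀ i, Measurable (τ i)) (hS : MeasurableSet S)
    (hKS : ∀ i, Set.MapsTo (τ i) K S) (hρK : ρ Kᶜ = 0) : hutchinsonOperator τ p ρ Sᶜ = 0 := by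
  simp only [hutchinsonOperator, Measure.coe_finsetSum, Finset.sum_apply,
    Measure.smul_apply, smul_eq_mul, Measure.map_apply (hτ _) hS.compl]
  refine Finset.sum_eq_zero fun i _ => ?_
  rw [measure_mono_null (fun x hx hxK => hx (hKS i hxK) : τ i ⁻¹' Sᶜ ⊆ Kᶜ) hρK, mul_zero]

theorem integral_eq_sum (hp : ∀ i, 0 ≤ p i) (hτ : ∀ i, Measurable (τ i)) {f : X → ℝ}
    (hf : StronglyMeasurable f) (hfτ : ∀ i, Integrable (f ∘ τ i) ρ) :
    ∫ x, f x ∂(hutchinsonOperator τ p ρ) = ∑ i, p i * ∫ x, f (τ i x) ∂ρ := by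
  rw [hutchinsonOperator, integral_finsetSum_measure fun i _ =>
    ((integrable_map_measure hf.aestronglyMeasurable (hτ i).aemeasurable).mpr
      (hfτ i)).smul_measure ENNReal.ofReal_ne_top]
  refine Finset.sum_congr rfl fun i _ => ?_
  rw [integral_smul_measure, integral_map (hτ i).aemeasurable hf.aestronglyMeasurable,
    ENNReal.toReal_ofReal (hp i), smul_eq_mul]

variable [TopologicalSpace X] [T2Space X] [BorelSpace X] [IsFiniteMeasure ρ] {K : Set X}

theorem integral_eq_sum_of_isFixedPt (hp : ∀ i, 0 ≤ p i) (hτ : ∀ i, Continuous (τ i))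
    (hK : IsCompact K) (hρK : ρ Kᶜ = 0) (hρ : IsFixedPt (hutchinsonOperator τ p) ρ)
    {f : X → ℝ} (hf : Continuous f) : ∫ x, f x ∂ρ = ∑ i, p i * ∫ x, f (τ i x) ∂ρ := by
  conv_lhs => rw [← hρ]
  exact integral_eq_sum hp (fun i => (hτ i).measurable) hf.stronglyMeasurable fun i =>
    (hf.comp (hτ i)).integrable_of_measure_compl_eq_zero hK hρK

end hutchinsonOperator

theorem Polynomial.integral_eval_eq_of_integral_pow_eq {μ₁ μ₂ : Measure ℝ}
    (hμ₁ : ∀ n : ℕ, Integrable (fun x => x ^ n) μ₁)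
    (hμ₂ : ∀ n : ℕ, Integrable (fun x => x ^ n) μ₂)
    (h : ∀ n : ℕ, ∫ x, x ^ n ∂μ₁ = ∫ x, x ^ n ∂μ₂) (q : ℝ[X]) :
    ∫ x, q.eval x ∂μ₁ = ∫ x, q.eval x ∂μ₂ := by
  simp only [Polynomial.eval_eq_sum_range]
  rw [integral_finsetSum _ fun n _ => (hμ₁ n).const_mul _,
    integral_finsetSum _ fun n _ => (hμ₂ n).const_mul _]
  simp only [integral_const_mul, h]

theorem MeasureTheory.Measure.ext_of_forall_integral_pow_eq {μ₁ μ₂ : Measure ℝ}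
    [IsFiniteMeasure μ₁] [IsFiniteMeasure μ₂] {K : Set ℝ} (hK : IsCompact K)
    (hμ₁K : μ₁ Kᶜ = 0) (hμ₂K : μ₂ Kᶜ = 0) (h : ∀ n : ℕ, ∫ x, x ^ n ∂μ₁ = ∫ x, x ^ n ∂μ₂) :
    μ₁ = μ₂ := by
  refine ext_of_forall_integral_eq_of_IsFiniteMeasure fun g => ?_
  obtain ⟨a, ha⟩ := hK.bddBelow
  obtain ⟨b, hb⟩ := hK.bddAbove
  have hKab : K ⊆ Set.Icc a b := fun x hx => ⟨ha hx, hb hx⟩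
  set C := μ₁.real Set.univ + μ₂.real Set.univ
  have hint₁ : ∀ {f : ℝ → ℝ}, Continuous f → Integrable f μ₁ := fun hf =>
    hf.integrable_of_measure_compl_eq_zero hK hμ₁K
  have hint₂ : ∀ {f : ℝ → ℝ}, Continuous f → Integrable f μ₂ := fun hf =>
    hf.integrable_of_measure_compl_eq_zero hK hμ₂K
  have hpoly := Polynomial.integral_eval_eq_of_integral_pow_eq
    (fun n => hint₁ (continuous_pow n)) (fun n => hint₂ (continuous_pow n)) h
  have happrox : ∀ ε > 0, |∫ x, g x ∂μ₁ - ∫ x, g x ∂μ₂| ≤ ε * C := by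
    intro ε hε
    obtain ⟨q, hq⟩ := exists_polynomial_near_of_continuousOn a b g g.continuous.continuousOn ε hε
    have hgq : ∀ x ∈ K, |g x - q.eval x| ≤ ε := fun x hx => by
      rw [abs_sub_comm]; exact (hq x (hKab hx)).le
    have h₁ := abs_integral_sub_integral_le_of_forall_mem (hint₁ g.continuous)
      (hint₁ q.continuous) hμ₁K hgq
    have h₂ := abs_integral_sub_integral_le_of_forall_mem (hint₂ g.continuous)
      (hint₂ q.continuous) hμ₂K hgq
    rw [hpoly] at h₁
    calc |∫ x, g x ∂μ₁ - ∫ x, g x ∂μ₂|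
        ≤ |∫ x, g x ∂μ₁ - ∫ x, q.eval x ∂μ₂| + |∫ x, g x ∂μ₂ - ∫ x, q.eval x ∂μ₂| := by
          rw [abs_sub_comm (∫ x, g x ∂μ₂)]; exact abs_sub_le _ _ _
      _ ≤ ε * C := by linarith
  refine eq_of_abs_sub_nonpos (le_of_forall_pos_lt_add fun ε hε => ?_)
  calc |∫ x, g x ∂μ₁ - ∫ x, g x ∂μ₂| ≤ ε / (C + 1) * C := happrox _ (by positivity)
    _ < 0 + ε := by
      rw [zero_add, div_mul_eq_mul_div, div_lt_iff₀ (by positivity)]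
      nlinarith

section Contraction

variable {X I : Type*} [MetricSpace X] [MeasurableSpace X] [BorelSpace X] [Fintype I]
  {τ : I → X → X} {r : I → ℝ≥0} {p : I → ℝ} {μ ν : Measure X}
  [IsProbabilityMeasure μ] [IsProbabilityMeasure ν] {K : Set X}

theorem abs_integral_sub_integral_le_of_lipschitzWith {x₀ : X} {R : ℝ}
    (hK : IsCompact K) (hμK : μ Kᶜ = 0) (hνK : ν Kᶜ = 0) (hKR : K ⊆ closedBall x₀ R)
    {L : ℝ≥0} {f : X → ℝ} (hf : LipschitzWith L f) :
    |∫ x, f x ∂ν - ∫ x, f x ∂μ| ≤ 2 * L * R := by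
  have hbound : ∀ ρ : Measure X, [IsProbabilityMeasure ρ] → ρ Kᶜ = 0 →
      |∫ x, f x ∂ρ - f x₀| ≤ L * R := by
    intro ρ _ hρK
    have hmem : ∀ x ∈ K, |f x - f x₀| ≤ L * R := fun x hx =>
      (hf.dist_le_mul x x₀).trans (mul_le_mul_of_nonneg_left (hKR hx) L.coe_nonneg)
    simpa using abs_integral_sub_integral_le_of_forall_mem
      (hf.continuous.integrable_of_measure_compl_eq_zero hK hρK) (integrable_const (f x₀))
      hρK hmem
  have hν := hbound ν hνK
  have hμ := hbound μ hμK
  calc |∫ x, f x ∂ν - ∫ x, f x ∂μ|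
      ≤ |∫ x, f x ∂ν - f x₀| + |∫ x, f x ∂μ - f x₀| := by
        rw [abs_sub_comm (∫ x, f x ∂μ)]; exact abs_sub_le _ _ _
    _ ≤ 2 * L * R := by linarith

theorem abs_integral_sub_integral_le_of_isFixedPt {x₀ : X} {R : ℝ} {c : ℝ≥0}
    (hK : IsCompact K) (hμK : μ Kᶜ = 0) (hνK : ν Kᶜ = 0) (hKR : K ⊆ closedBall x₀ R)
    (hlip : ∀ i, LipschitzWith (r i) (τ i)) (hrc : ∀ i, r i ≤ c)
    (hp : ∀ i, 0 ≤ p i) (hpsum : ∑ i, p i = 1)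
    (hμ : IsFixedPt (hutchinsonOperator τ p) μ) (hν : IsFixedPt (hutchinsonOperator τ p) ν)
    (n : ℕ) {L : ℝ≥0} {f : X → ℝ} (hf : LipschitzWith L f) :
    |∫ x, f x ∂ν - ∫ x, f x ∂μ| ≤ 2 * L * R * c ^ n := by
  induction n generalizing L f with
  | zero => simpa using abs_integral_sub_integral_le_of_lipschitzWith hK hμK hνK hKR hf
  | succ n ih =>
    have hτ : ∀ i, Continuous (τ i) := fun i => (hlip i).continuous
    have hfτ : ∀ i, LipschitzWith (L * c) (f ∘ τ i) := fun i =>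
      (hf.comp (hlip i)).weaken (mul_le_mul_of_nonneg_left (hrc i) L.2)
    rw [hutchinsonOperator.integral_eq_sum_of_isFixedPt hp hτ hK hνK hν hf.continuous,
      hutchinsonOperator.integral_eq_sum_of_isFixedPt hp hτ hK hμK hμ hf.continuous,
      ← Finset.sum_sub_distrib]
    calc |∑ i, (p i * ∫ x, f (τ i x) ∂ν - p i * ∫ x, f (τ i x) ∂μ)|
        ≤ ∑ i, p i * |∫ x, f (τ i x) ∂ν - ∫ x, f (τ i x) ∂μ| := by
          refine (Finset.abs_sum_le_sum_abs _ _).trans_eq (Finset.sum_congr rfl fun i _ => ?_)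
          rw [← mul_sub, abs_mul, abs_of_nonneg (hp i)]
      _ ≤ ∑ i, p i * (2 * ↑(L * c) * R * c ^ n) :=
          Finset.sum_le_sum fun i _ => mul_le_mul_of_nonneg_left (ih (hfτ i)) (hp i)
      _ = 2 * L * R * c ^ (n + 1) := by
          rw [← Finset.sum_mul, hpsum]; push_cast; ring

theorem eq_of_isFixedPt_hutchinsonOperator (hK : IsCompact K) (hμK : μ Kᶜ = 0) (hνK : ν Kᶜ = 0)
    (hlip : ∀ i, LipschitzWith (r i) (τ i)) (hr : ∀ i, r i < 1)
    (hp : ∀ i, 0 ≤ p i) (hpsum : ∑ i, p i = 1)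
    (hμ : IsFixedPt (hutchinsonOperator τ p) μ) (hν : IsFixedPt (hutchinsonOperator τ p) ν) :
    ν = μ := by
  set c : ℝ≥0 := Finset.univ.sup r
  have hc : (c : ℝ) < 1 :=
    NNReal.coe_lt_one.mpr ((Finset.sup_lt_iff zero_lt_one).mpr fun i _ => hr i)
  have hrc : ∀ i, r i ≤ c := fun i => Finset.le_sup (Finset.mem_univ i)
  obtain ⟨x₀⟩ := nonempty_of_isProbabilityMeasure μ
  obtain ⟨R, hKR⟩ := hK.isBounded.subset_closedBall x₀
  refine Measure.ext_of_forall_lipschitzWith_integral_eq fun L f hf => ?_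
  have hlim : Tendsto (fun n : ℕ => 2 * L * R * (c : ℝ) ^ n) atTop (𝓝 0) := by
    simpa using (tendsto_pow_atTop_nhds_zero_of_lt_one (NNReal.coe_nonneg _) hc).const_mul
      (2 * L * R)
  have hle := ge_of_tendsto' hlim fun n =>
    abs_integral_sub_integral_le_of_isFixedPt hK hμK hνK hKR hlip hrc hp hpsum hμ hν n hf
  exact eq_of_abs_sub_nonpos hle

end Contraction

/-- **Uniqueness of the moment fixed point for a contractive IFS.** Let `(τ i)` be a
finite family of contractive maps on `ℝ` with probability weights `p i > 0`,
`∑ p i = 1`, and let `μ` be the Hutchinson equilibrium measure (the compactly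
supported Borel probability measure with `μ = ∑ i, p i • (μ ∘ τ i⁻¹)`).  If `ν` is a
Borel probability measure whose support is contained in the support of `μ` and whose
moment matrix is a fixed point of the moment transformation, then `ν = μ`. -/
theorem ifs_moment_fixed_point_unique {I : Type} [Fintype I]
    (τ : I → ℝ → ℝ) (r : I → NNReal) (hr : ∀ i, r i < 1)
    (hlip : ∀ i, LipschitzWith (r i) (τ i))
    (p : I → ℝ) (hp : ∀ i, 0 < p i) (hpsum : ∑ i, p i = 1)
    (μ : Measure ℝ) [IsProbabilityMeasure μ]
    (hμcompact : ∃ K : Set ℝ, IsCompact K ∧ μ Kᶜ = 0)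
    (hμfix : μ = ∑ i, ENNReal.ofReal (p i) • μ.map (τ i))
    (ν : Measure ℝ) [IsProbabilityMeasure ν]
    (hsupp : ∀ U : Set ℝ, IsOpen U → μ U = 0 → ν U = 0)
    (hνmom : ∀ n : ℕ, ∫ x, x ^ n ∂ν = ∑ i, p i * ∫ x, (τ i x) ^ n ∂ν) :
    ν = μ := by
  obtain ⟨K, hK, hμK⟩ := hμcompact
  have hνK : ν Kᶜ = 0 := hsupp _ hK.isClosed.isOpen_compl hμK
  have hτ : ∀ i, Continuous (τ i) := fun i => (hlip i).continuous
  set K' := K ∪ ⋃ i, τ i '' K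
  have hK' : IsCompact K' := hK.union (isCompact_iUnion fun i => hK.image (hτ i))
  have hνK' : ν K'ᶜ = 0 := measure_mono_null (Set.compl_subset_compl.mpr Set.subset_union_left) hνK
  have hHνK' : hutchinsonOperator τ p ν K'ᶜ = 0 :=
    hutchinsonOperator.apply_compl_eq_zero (fun i => (hτ i).measurable) hK'.isClosed.measurableSet
      (fun i x hx => Or.inr (Set.mem_iUnion.mpr ⟨i, x, hx, rfl⟩)) hνK
  have hνfix : IsFixedPt (hutchinsonOperator τ p) ν := by
    refine Measure.ext_of_forall_integral_pow_eq hK' hHνK' hνK' fun n => ?_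
    rw [hνmom n, hutchinsonOperator.integral_eq_sum (fun i => (hp i).le)
      (fun i => (hτ i).measurable) (continuous_pow n).stronglyMeasurable fun i =>
        ((continuous_pow n).comp (hτ i)).integrable_of_measure_compl_eq_zero hK hνK]
  exact eq_of_isFixedPt_hutchinsonOperator hK hμK hνK hlip hr (fun i => (hp i).le) hpsum
    hμfix.symm hνfix
end

section
/- Let (τ_i)_{i∈I} be a finite family of affine maps τ_i(x) = c_i·x + b_i on ℝ with |c_i| < 1, let (p_i)_{i∈I} be weights with p_i ∈ (0,1) and ∑_{i∈I} p_i = 1, and let μ be a Borel probability measure on ℝ with compact support satisfying μ = ∑_{i∈I} p_i (μ ∘ τ_i⁻¹). Then the moment matrix M^{(μ)} is a fixed point of the transformation M ↦ ∑_i p_i A_i* M A_i; explicitly, for all m, n ∈ ℕ: ∫_ℝ x^{m+n} dμ(x) = ∑_{i∈I} p_i ∑_{j=0}^{m} ∑_{ℓ=0}^{n} binom(m,j) · binom(n,ℓ) · b_i^{m+n−j−ℓ} · c_i^{j+ℓ} · ∫_ℝ x^{j+ℓ} dμ(x). -/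
/-!
Pushing the self-similarity `μ = ∑ i, p i • τᵢ₊μ` through the integral gives
`∫ f dμ = ∑ i, p i * ∫ f ∘ τᵢ dμ` for every `f` integrable along each `τᵢ`; for `f x = x ^ (m + n)`
each `f ∘ τᵢ` is a polynomial, integrable since `μ` lives on a compact set. Expanding
`(c x + b) ^ (m + n) = (c x + b) ^ m * (c x + b) ^ n` by the binomial theorem in each factor turns
`∫ (τᵢ x) ^ (m + n) dμ` into the `(m, n)` entry of `Aᵢ* M Aᵢ`.
-/

open MeasureTheory

theorem Continuous.integrable_of_ae_mem_isCompact {X E : Type*} [TopologicalSpace X] [T2Space X]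
    [MeasurableSpace X] [OpensMeasurableSpace X] [NormedAddCommGroup E] {μ : Measure X}
    [IsFiniteMeasureOnCompacts μ] {K : Set X} (hK : IsCompact K) (hμK : ∀ᵐ x ∂μ, x ∈ K)
    {f : X → E} (hf : Continuous f) : Integrable f μ := by
  rw [← Measure.restrict_eq_self_of_ae_mem hμK]
  exact hf.continuousOn.integrableOn_compact hK

theorem integral_eq_sum_integral_comp_of_eq_sum_map {α E ι : Type*} [MeasurableSpace α]
    [NormedAddCommGroup E] [NormedSpace ℝ E] [Fintype ι] {μ : Measure α} {p : ι → ℝ}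
    (hp : ∀ i, 0 ≤ p i) {τ : ι → α → α} (hτ : ∀ i, Measurable (τ i))
    (hμ : μ = ∑ i, ENNReal.ofReal (p i) • μ.map (τ i)) {f : α → E} (hf : StronglyMeasurable f)
    (hfτ : ∀ i, Integrable (f ∘ τ i) μ) :
    ∫ x, f x ∂μ = ∑ i, p i • ∫ x, f (τ i x) ∂μ := by
  have hf_map : ∀ i, Integrable f (μ.map (τ i)) := fun i =>
    (integrable_map_measure hf.aestronglyMeasurable (hτ i).aemeasurable).mpr (hfτ i)
  conv_lhs => rw [hμ]
  rw [integral_finsetSum_measure fun i _ => (hf_map i).smul_measure ENNReal.ofReal_ne_top]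
  refine Finset.sum_congr rfl fun i _ => ?_
  rw [integral_smul_measure, ENNReal.toReal_ofReal (hp i),
    integral_map (hτ i).aemeasurable hf.aestronglyMeasurable]

theorem mul_add_pow_add_eq_sum {R : Type*} [CommSemiring R] (c b x : R) (m n : ℕ) :
    (c * x + b) ^ (m + n) =
      ∑ j ∈ Finset.range (m + 1), ∑ l ∈ Finset.range (n + 1),
        (m.choose j : R) * (n.choose l : R) * b ^ (m + n - j - l) * c ^ (j + l) * x ^ (j + l) := by
  rw [pow_add, add_pow, add_pow, Finset.sum_mul_sum]
  refine Finset.sum_congr rfl fun j hj => Finset.sum_congr rfl fun l hl => ?_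
  rw [Finset.mem_range] at hj hl
  rw [show m + n - j - l = (m - j) + (n - l) by omega]
  ring

theorem integral_mul_add_pow_add_eq_sum_moments {μ : Measure ℝ}
    (hμ : ∀ k : ℕ, Integrable (fun x => x ^ k) μ) (c b : ℝ) (m n : ℕ) :
    ∫ x, (c * x + b) ^ (m + n) ∂μ =
      ∑ j ∈ Finset.range (m + 1), ∑ l ∈ Finset.range (n + 1),
        (m.choose j : ℝ) * (n.choose l : ℝ) * b ^ (m + n - j - l) * c ^ (j + l) *
          ∫ x, x ^ (j + l) ∂μ := by
  simp_rw [mul_add_pow_add_eq_sum c b]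
  rw [integral_finsetSum _ fun j _ => integrable_finsetSum _ fun l _ => (hμ _).const_mul _]
  refine Finset.sum_congr rfl fun j _ => ?_
  rw [integral_finsetSum _ fun l _ => (hμ _).const_mul _]
  exact Finset.sum_congr rfl fun l _ => integral_const_mul _ _

theorem affine_ifs_moment_fixed_point_general {I : Type} [Fintype I]
    (b c : I → ℝ)
    (p : I → ℝ) (hp : ∀ i, p i ∈ Set.Ioo (0 : ℝ) 1)
    (μ : Measure ℝ) [IsProbabilityMeasure μ]
    (hμcompact : ∃ K : Set ℝ, IsCompact K ∧ μ Kᶜ = 0)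
    (hμfix : μ = ∑ i, ENNReal.ofReal (p i) • μ.map (fun x => c i * x + b i)) :
    ∀ m n : ℕ,
      ∫ x, x ^ (m + n) ∂μ =
      ∑ i, p i * ∑ j ∈ Finset.range (m + 1), ∑ l ∈ Finset.range (n + 1),
        (m.choose j : ℝ) * (n.choose l : ℝ) * b i ^ (m + n - j - l) * c i ^ (j + l) *
        ∫ x, x ^ (j + l) ∂μ := by
  intro m n
  obtain ⟨K, hK, hKc⟩ := hμcompact
  have hint : ∀ {f : ℝ → ℝ}, Continuous f → Integrable f μ :=
    fun hf => hf.integrable_of_ae_mem_isCompact hK (ae_iff.mpr hKc)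
  have hτ : ∀ i, Measurable fun x : ℝ => c i * x + b i := fun i => by fun_prop
  rw [integral_eq_sum_integral_comp_of_eq_sum_map (fun i => (hp i).1.le) hτ hμfix
    (continuous_pow _).stronglyMeasurable fun i => hint (by fun_prop)]
  refine Finset.sum_congr rfl fun i _ => ?_
  rw [smul_eq_mul, integral_mul_add_pow_add_eq_sum_moments (fun k => hint (continuous_pow k))]

/-- **The moment matrix of the equilibrium measure of an affine IFS is a fixed point
of the transformation `M ↦ ∑ i, p i • Aᵢ* M Aᵢ`**, written out entrywise. -/
theorem affine_ifs_moment_fixed_point {I : Type} [Fintype I]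
    (b c : I → ℝ) (hc : ∀ i, |c i| < 1)
    (p : I → ℝ) (hp : ∀ i, p i ∈ Set.Ioo (0 : ℝ) 1) (hpsum : ∑ i, p i = 1)
    (μ : Measure ℝ) [IsProbabilityMeasure μ]
    (hμcompact : ∃ K : Set ℝ, IsCompact K ∧ μ Kᶜ = 0)
    (hμfix : μ = ∑ i, ENNReal.ofReal (p i) • μ.map (fun x => c i * x + b i)) :
    ∀ m n : ℕ,
      ∫ x, x ^ (m + n) ∂μ =
      ∑ i, p i * ∑ j ∈ Finset.range (m + 1), ∑ l ∈ Finset.range (n + 1),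
        (m.choose j : ℝ) * (n.choose l : ℝ) * b i ^ (m + n - j - l) * c i ^ (j + l) *
        ∫ x, x ^ (j + l) ∂μ :=
  affine_ifs_moment_fixed_point_general b c p hp μ hμcompact hμfix
end

section
/- Let μ be a finite positive Borel measure on ℝ with ∫_ℝ |x|^k dμ(x) < ∞ for all k ∈ ℕ. Set 𝓜_k = ∫_ℝ |x|^k dμ(x) and define weights w_k = (1 + k²)·𝓜_k². For a finitely supported sequence c, let f_c(x) = ∑_i c_i x^i and Q(c) = ∫_ℝ |f_c(x)|² dμ(x). Then Q is closable with respect to the weighted ℓ²(w)-norm: if (c_n) is a sequence of finitely supported sequences such that ∑_i w_i |c_n(i)|² → 0 as n → ∞ and ∫_ℝ |f_{c_n}(x) − f_{c_m}(x)|² dμ(x) → 0 as m, n → ∞, then ∫_ℝ |f_{c_n}(x)|² dμ(x) → 0 as n → ∞. -/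
/-! The polynomials `f_{c n}` form a Cauchy sequence in `L²(μ)`, so they converge to some `G`.
For bounded continuous `φ`, Cauchy–Schwarz with the weights `(1 + i²)` gives
`|∫ f_c φ dμ| ≤ ‖φ‖ ∑ |c i| 𝓜_i ≤ ‖φ‖ ‖c‖_{ℓ²(w)} (∑ (1 + i²)⁻¹)^{1/2}`, so `⟪f_{c n}, φ⟫ → 0`.
Hence `G` is orthogonal to the dense subspace of bounded continuous functions, so `G = 0` and
`Q(c n) = ‖f_{c n}‖² → 0`. -/

open MeasureTheory Filter Topology InnerProductSpace
open scoped BoundedContinuousFunction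

theorem tendsto_zero_of_cauchySeq_of_denseRange_inner {𝕜 E ι : Type*} [RCLike 𝕜]
    [NormedAddCommGroup E] [InnerProductSpace 𝕜 E] [CompleteSpace E] {F : ℕ → E}
    (hF : CauchySeq F) {v : ι → E} (hv : DenseRange v)
    (h : ∀ i, Tendsto (fun n => ⟪F n, v i⟫_𝕜) atTop (𝓝 0)) :
    Tendsto F atTop (𝓝 0) := by
  obtain ⟨G, hG⟩ := cauchySeq_tendsto_of_complete hF
  have hG0 : G = 0 := hv.eq_zero_of_inner_left 𝕜 fun i =>
    tendsto_nhds_unique (hG.inner tendsto_const_nhds) (h i)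
  rwa [hG0] at hG

theorem summable_inv_one_add_sq : Summable fun i : ℕ => (1 + (i : ℝ) ^ 2)⁻¹ := by
  refine (Real.summable_nat_pow_inv.2 one_lt_two).of_norm_bounded_eventually_nat ?_
  filter_upwards [eventually_gt_atTop 0] with i hi
  rw [Real.norm_of_nonneg (by positivity)]
  exact inv_anti₀ (by positivity) (le_add_of_nonneg_left zero_le_one)

theorem sum_abs_mul_le_sqrt_mul_sqrt_tsum (s : Finset ℕ) (d a : ℕ → ℝ) :
    ∑ i ∈ s, |d i| * |a i| ≤
      √(∑ i ∈ s, (1 + (i : ℝ) ^ 2) * a i ^ 2 * d i ^ 2) * √(∑' i : ℕ, (1 + (i : ℝ) ^ 2)⁻¹) := by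
  calc ∑ i ∈ s, |d i| * |a i|
      = ∑ i ∈ s, √((1 + (i : ℝ) ^ 2) * a i ^ 2 * d i ^ 2) * √((1 + (i : ℝ) ^ 2)⁻¹) := by
        refine Finset.sum_congr rfl fun i _ => ?_
        rw [← Real.sqrt_mul (by positivity),
          show (1 + (i : ℝ) ^ 2) * a i ^ 2 * d i ^ 2 * (1 + (i : ℝ) ^ 2)⁻¹ = (d i * a i) ^ 2 by
            field_simp,
          Real.sqrt_sq_eq_abs, abs_mul]
    _ ≤ √(∑ i ∈ s, (1 + (i : ℝ) ^ 2) * a i ^ 2 * d i ^ 2) * √(∑ i ∈ s, (1 + (i : ℝ) ^ 2)⁻¹) :=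
        Real.sum_sqrt_mul_sqrt_le s (fun i => by positivity) fun i => by positivity
    _ ≤ _ := by
        gcongr
        exact summable_inv_one_add_sq.sum_le_tsum s fun i _ => by positivity

section L2

variable {α : Type*} [MeasurableSpace α] {μ : Measure α}

theorem real_inner_eq_integral_of_ae_eq {F G : Lp ℝ 2 μ} {f g : α → ℝ}
    (hF : F =ᵐ[μ] f) (hG : G =ᵐ[μ] g) : ⟪F, G⟫_ℝ = ∫ x, f x * g x ∂μ := by
  rw [L2.inner_def]
  refine integral_congr_ae ?_
  filter_upwards [hF, hG] with x hFx hGx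
  simp [hFx, hGx, mul_comm]

theorem norm_sq_eq_integral_of_ae_eq {F : Lp ℝ 2 μ} {f : α → ℝ} (hF : F =ᵐ[μ] f) :
    ‖F‖ ^ 2 = ∫ x, f x ^ 2 ∂μ := by
  simp_rw [← real_inner_self_eq_norm_sq, real_inner_eq_integral_of_ae_eq hF hF, sq]

theorem cauchySeq_toLp_of_tendsto_integral_sq_sub {f : ℕ → α → ℝ} (hf : ∀ n, MemLp (f n) 2 μ)
    (h : Tendsto (fun q : ℕ × ℕ => ∫ x, (f q.1 x - f q.2 x) ^ 2 ∂μ) atTop (𝓝 0)) :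
    CauchySeq fun n => (hf n).toLp (f n) := by
  rw [cauchySeq_iff_tendsto_dist_atTop_0]
  convert (Real.continuous_sqrt.tendsto' 0 0 Real.sqrt_zero).comp h using 2 with q
  have hnorm := norm_sq_eq_integral_of_ae_eq ((hf q.1).sub (hf q.2)).coeFn_toLp
  simp only [Pi.sub_apply] at hnorm
  rw [Function.comp_apply, dist_eq_norm, ← MemLp.toLp_sub, ← hnorm, Real.sqrt_sq (norm_nonneg _)]

end L2

theorem memLp_two_pow {μ : Measure ℝ} {i : ℕ} (h : Integrable (fun x : ℝ => |x| ^ (2 * i)) μ) :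
    MemLp (fun x : ℝ => x ^ i) 2 μ := by
  rw [memLp_two_iff_integrable_sq (continuous_pow i).aestronglyMeasurable]
  refine h.congr (Eventually.of_forall fun x => ?_)
  dsimp only
  rw [pow_mul', ← abs_pow, sq_abs]

def genFun (d : ℕ →₀ ℝ) (x : ℝ) : ℝ := ∑ i ∈ d.support, d i * x ^ i

theorem memLp_genFun {μ : Measure ℝ} (hmom : ∀ k : ℕ, Integrable (fun x : ℝ => |x| ^ k) μ)
    (d : ℕ →₀ ℝ) : MemLp (genFun d) 2 μ :=
  memLp_finsetSum _ fun i _ => (memLp_two_pow (hmom (2 * i))).const_mul (d i)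

theorem abs_integral_genFun_mul_le {μ : Measure ℝ}
    (hmom : ∀ k : ℕ, Integrable (fun x : ℝ => |x| ^ k) μ) (d : ℕ →₀ ℝ) {φ : ℝ → ℝ} {C : ℝ}
    (hφ : ∀ x, |φ x| ≤ C) :
    |∫ x, genFun d x * φ x ∂μ| ≤ C * ∑ i ∈ d.support, |d i| * ∫ x, |x| ^ i ∂μ := by
  have hC : 0 ≤ C := (abs_nonneg _).trans (hφ 0)
  calc |∫ x, genFun d x * φ x ∂μ|
      ≤ ∫ x, ∑ i ∈ d.support, C * |d i| * |x| ^ i ∂μ := by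
        rw [← Real.norm_eq_abs]
        refine norm_integral_le_of_norm_le
          (integrable_finsetSum (μ := μ) _ fun i _ => (hmom i).const_mul _)
          (Eventually.of_forall fun x => ?_)
        rw [Real.norm_eq_abs, abs_mul, genFun, mul_comm]
        refine (mul_le_mul (hφ x) (Finset.abs_sum_le_sum_abs _ _) (abs_nonneg _) hC).trans_eq ?_
        simp only [Finset.mul_sum, abs_mul, abs_pow, mul_assoc]
    _ = C * ∑ i ∈ d.support, |d i| * ∫ x, |x| ^ i ∂μ := by
        rw [integral_finsetSum _ fun i _ => (hmom i).const_mul _, Finset.mul_sum]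
        simp only [integral_const_mul, mul_assoc]

theorem tendsto_sum_abs_mul_of_tendsto_weighted_sum {c : ℕ → ℕ →₀ ℝ} {a : ℕ → ℝ}
    (ha : ∀ i, 0 ≤ a i)
    (h : Tendsto (fun n => ∑ i ∈ (c n).support, (1 + (i : ℝ) ^ 2) * a i ^ 2 * c n i ^ 2)
      atTop (𝓝 0)) :
    Tendsto (fun n => ∑ i ∈ (c n).support, |c n i| * a i) atTop (𝓝 0) := by
  have hbound := ((Real.continuous_sqrt.tendsto 0).comp h).mul_const
    √(∑' i : ℕ, (1 + (i : ℝ) ^ 2)⁻¹)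
  rw [Real.sqrt_zero, zero_mul] at hbound
  dsimp only [Function.comp_def] at hbound
  refine squeeze_zero (fun n => Finset.sum_nonneg fun i _ => mul_nonneg (abs_nonneg _) (ha i))
    (fun n => ?_) hbound
  simpa only [abs_of_nonneg (ha _)] using
    sum_abs_mul_le_sqrt_mul_sqrt_tsum (c n).support (c n) a

/-- **Closability of the moment quadratic form** in the weighted space `ℓ²(w)` with
weights `w k = (1 + k²) 𝓜_k²`, where `𝓜_k = ∫ |x|^k dμ`: if a sequence `(c n)` of
finitely supported sequences tends to `0` in `ℓ²(w)` and is Cauchy for the quadratic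
form `Q(c) = ∫ |f_c|² dμ` (with `f_c` the generating polynomial of `c`), then
`Q(c n) → 0`. -/
theorem moment_quadratic_form_closable (μ : Measure ℝ) [IsFiniteMeasure μ]
    (hmom : ∀ k : ℕ, Integrable (fun x : ℝ => |x| ^ k) μ)
    (w : ℕ → ℝ) (hw : ∀ k : ℕ, w k = (1 + (k : ℝ) ^ 2) * (∫ x, |x| ^ k ∂μ) ^ 2)
    (c : ℕ → ℕ →₀ ℝ)
    (h0 : Tendsto (fun n => ∑ i ∈ (c n).support, w i * (c n i) ^ 2) atTop (nhds 0))
    (hcauchy : Tendsto (fun q : ℕ × ℕ =>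
        ∫ x, ((∑ i ∈ (c q.1).support, c q.1 i * x ^ i) -
              (∑ i ∈ (c q.2).support, c q.2 i * x ^ i)) ^ 2 ∂μ)
      (atTop ×ˢ atTop) (nhds 0)) :
    Tendsto (fun n => ∫ x, (∑ i ∈ (c n).support, c n i * x ^ i) ^ 2 ∂μ)
      atTop (nhds 0) := by
  have hf n := memLp_genFun hmom (c n)
  set F : ℕ → Lp ℝ 2 μ := fun n => (hf n).toLp (genFun (c n))
  have hF : CauchySeq F :=
    cauchySeq_toLp_of_tendsto_integral_sq_sub hf (by rwa [prod_atTop_atTop_eq] at hcauchy)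
  simp_rw [hw] at h0
  have hmoments := tendsto_sum_abs_mul_of_tendsto_weighted_sum
    (fun i => integral_nonneg fun x => by positivity) h0
  have htest (φ : ℝ →ᵇ ℝ) :
      Tendsto (fun n => ⟪F n, BoundedContinuousFunction.toLp 2 μ ℝ φ⟫_ℝ) atTop (𝓝 0) := by
    refine squeeze_zero_norm (fun n => ?_) (by simpa using hmoments.const_mul ‖φ‖)
    rw [real_inner_eq_integral_of_ae_eq (hf n).coeFn_toLp (φ.coeFn_toLp 2 μ ℝ), Real.norm_eq_abs]
    exact abs_integral_genFun_mul_le hmom (c n) fun x => φ.norm_coe_le_norm x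
  have hF0 := tendsto_zero_of_cauchySeq_of_denseRange_inner hF
    (BoundedContinuousFunction.toLp_denseRange ℝ μ ℝ ENNReal.ofNat_ne_top) htest
  have hnorm := hF0.norm.pow 2
  rw [norm_zero, zero_pow two_ne_zero] at hnorm
  exact hnorm.congr fun n => norm_sq_eq_integral_of_ae_eq (hf n).coeFn_toLp
end

section
/- Let f ∈ L²(0,1). Then for every x ∈ (0,1): the sequence j ↦ ∫₀¹ f(y) y^j dy is square-summable, the series ∑_{j=0}^∞ (∫₀¹ f(y) y^j dy) x^j converges absolutely, the function y ↦ f(y)/(1 − x·y) is integrable on (0,1), and ∑_{j=0}^∞ (∫₀¹ f(y) y^j dy) · x^j = ∫₀¹ f(y)/(1 − x·y) dy. That is, the operator F F* on L²(0,1) is the integral operator K with kernel k(x,y) = 1/(1 − xy). -/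
/-!
Expanding `1 / (1 - x y) = ∑ (x y) ^ j` and integrating termwise, which is legitimate because the
`j`-th term is dominated by `‖f‖ x ^ j`, gives the identity.

The square-summability of the moments `c j = ∫₀¹ f(y) y ^ j dy` is Hilbert's inequality, proved by
Schur's test. Cauchy–Schwarz with the weight `y ^ j / √(1 - y)` gives
`‖c j‖² ≤ (∫ ‖f y‖² y ^ j √(1 - y)) · ∫ z ^ j / √(1 - z)`, and summing over `j` leaves the kernel
bound `∫₀¹ dz / (√(1 - z) (1 - y z)) ≤ 8 / √(1 - y)`. It follows from
`(√(1 - y) + √(1 - z))² ≤ 4 (1 - y z)`, since `z ↦ 1 / (√(1 - y) + √(1 - z))` is an explicit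
antiderivative of `1 / (2 √(1 - z) (√(1 - y) + √(1 - z))²)`.
-/

open MeasureTheory Set

theorem sq_integral_le_integral_mul_integral {α : Type*} [MeasurableSpace α] {μ : Measure α}
    {g h w : α → ℝ} (hg : Integrable g μ) (hh : Integrable h μ) (hw : Integrable w μ)
    (h_nonneg : 0 ≤ᵐ[μ] h) (w_nonneg : 0 ≤ᵐ[μ] w) (hghw : ∀ᵐ a ∂μ, g a ^ 2 ≤ h a * w a) :
    (∫ a, g a ∂μ) ^ 2 ≤ (∫ a, h a ∂μ) * ∫ a, w a ∂μ := by
  have quadratic_nonneg : ∀ s : ℝ,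
      0 ≤ (∫ a, h a ∂μ) * (s * s) + (-2 * ∫ a, g a ∂μ) * s + ∫ a, w a ∂μ := by
    intro s
    have hint : 0 ≤ ∫ a, (h a * (s * s) + -2 * g a * s + w a) ∂μ := by
      refine integral_nonneg_of_ae ?_
      filter_upwards [h_nonneg, w_nonneg, hghw] with a (ha : 0 ≤ h a) (hwa : 0 ≤ w a) hga
      -- `(2 g s)² ≤ 4 h w s² ≤ (h s² + w)²`
      have : |2 * g a * s| ≤ h a * (s * s) + w a :=
        abs_le_of_sq_le_sq (by nlinarith [sq_nonneg (h a * (s * s) - w a), sq_nonneg s])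
          (add_nonneg (mul_nonneg ha (mul_self_nonneg s)) hwa)
      show 0 ≤ _
      linarith [le_abs_self (2 * g a * s)]
    rwa [integral_add, integral_add, integral_mul_const, integral_mul_const, integral_const_mul]
      at hint
    all_goals fun_prop
  have := discrim_le_zero quadratic_nonneg
  rw [discrim] at this
  linarith

theorem hasDerivAt_sqrt_one_sub {z : ℝ} (hz : z < 1) :
    HasDerivAt (fun z => √(1 - z)) (-(2 * √(1 - z))⁻¹) z :=
  (((hasDerivAt_id z).const_sub 1).sqrt (by simp; linarith)).congr_deriv (by simp [neg_div])

theorem integrableOn_inv_sqrt_one_sub : IntegrableOn (fun z => (√(1 - z))⁻¹) (Ioo 0 1) :=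
  (intervalIntegral.integrableOn_deriv_of_nonneg (g := fun z => -2 * √(1 - z)) (by fun_prop)
    (fun z hz => ((hasDerivAt_sqrt_one_sub hz.2).const_mul (-2)).congr_deriv (by ring))
    (fun z _ => by positivity)).mono_set Ioo_subset_Ioc_self

theorem integrableOn_pow_div_sqrt_one_sub (j : ℕ) :
    IntegrableOn (fun z => z ^ j / √(1 - z)) (Ioo 0 1) := by
  simp only [div_eq_mul_inv]
  exact integrableOn_inv_sqrt_one_sub.continuousOn_mul_of_subset (continuous_pow j).continuousOn
    isCompact_Icc measurableSet_Ioo Ioo_subset_Icc_self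

theorem hasDerivAt_inv_add_sqrt_one_sub {a z : ℝ} (ha : 0 < a) (hz : z < 1) :
    HasDerivAt (fun z => (a + √(1 - z))⁻¹) ((2 * √(1 - z))⁻¹ / (a + √(1 - z)) ^ 2) z :=
  (((hasDerivAt_sqrt_one_sub hz).const_add a).inv (by positivity)).congr_deriv (by ring)

theorem inv_one_sub_mul_le_four_div_sq {y z : ℝ} (hy : y ∈ Ico 0 1) (hz : z ∈ Icc 0 1) :
    (1 - y * z)⁻¹ ≤ 4 / (√(1 - y) + √(1 - z)) ^ 2 := by
  obtain ⟨hy0, hy1⟩ := hy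
  obtain ⟨hz0, hz1⟩ := hz
  have ha : 0 < √(1 - y) := Real.sqrt_pos.2 (by linarith)
  have hyz : 0 < 1 - y * z := by nlinarith
  rw [inv_eq_one_div, div_le_div_iff₀ hyz (by positivity)]
  nlinarith [Real.sq_sqrt (by linarith : (0 : ℝ) ≤ 1 - y),
    Real.sq_sqrt (by linarith : (0 : ℝ) ≤ 1 - z), sq_nonneg (√(1 - y) - √(1 - z)),
    mul_nonneg hy0 (by linarith : (0 : ℝ) ≤ 1 - z), mul_nonneg hz0 (by linarith : (0 : ℝ) ≤ 1 - y)]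

theorem sum_range_pow_mul_integral_div_sqrt_le {y : ℝ} (hy : y ∈ Ico 0 1) (n : ℕ) :
    ∑ j ∈ Finset.range n, y ^ j * ∫ z in Ioo 0 1, z ^ j / √(1 - z) ≤ 8 / √(1 - y) := by
  set a := √(1 - y)
  have ha : 0 < a := Real.sqrt_pos.2 (by linarith [hy.2])
  set G' : ℝ → ℝ := fun z => (2 * √(1 - z))⁻¹ / (a + √(1 - z)) ^ 2
  have hderiv : ∀ z ∈ Ioo (0 : ℝ) 1, HasDerivAt (fun z => (a + √(1 - z))⁻¹) (G' z) z :=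
    fun z hz => hasDerivAt_inv_add_sqrt_one_sub ha hz.2
  have hcont : ContinuousOn (fun z => (a + √(1 - z))⁻¹) (Icc 0 1) :=
    ((by fun_prop : Continuous fun z => a + √(1 - z)).inv₀ (fun z => by positivity)).continuousOn
  have hG'_int : IntegrableOn G' (Ioc 0 1) :=
    intervalIntegral.integrableOn_deriv_of_nonneg hcont hderiv (fun z _ => by positivity)
  have hG'_integral : ∫ z in Ioo 0 1, G' z = a⁻¹ - (a + 1)⁻¹ := by
    rw [← integral_Ioc_eq_integral_Ioo, ← intervalIntegral.integral_of_le zero_le_one,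
      intervalIntegral.integral_eq_sub_of_hasDerivAt_of_le zero_le_one hcont hderiv
        ((intervalIntegrable_iff_integrableOn_Ioc_of_le zero_le_one).2 hG'_int)]
    norm_num
  have hterm_int : ∀ j : ℕ, IntegrableOn (fun z => y ^ j * (z ^ j / √(1 - z))) (Ioo 0 1) :=
    fun j => (integrableOn_pow_div_sqrt_one_sub j).const_mul (y ^ j)
  calc ∑ j ∈ Finset.range n, y ^ j * ∫ z in Ioo 0 1, z ^ j / √(1 - z)
      = ∫ z in Ioo 0 1, ∑ j ∈ Finset.range n, y ^ j * (z ^ j / √(1 - z)) := by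
        simp_rw [← integral_const_mul]
        exact (integral_finsetSum _ fun j _ => hterm_int j).symm
    _ ≤ ∫ z in Ioo 0 1, 8 * G' z := by
        refine setIntegral_mono_on (integrable_finsetSum _ fun j _ => hterm_int j)
          ((hG'_int.mono_set Ioo_subset_Ioc_self).const_mul 8) measurableSet_Ioo fun z hz => ?_
        have hz1 : 0 < √(1 - z) := Real.sqrt_pos.2 (by linarith [hz.2])
        calc ∑ j ∈ Finset.range n, y ^ j * (z ^ j / √(1 - z))
            = (∑ j ∈ Finset.range n, (y * z) ^ j) / √(1 - z) := by
              simp_rw [Finset.sum_div, mul_pow, mul_div_assoc]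
          _ ≤ (1 - y * z)⁻¹ / √(1 - z) := by
              gcongr
              simpa [← Finset.range_eq_Ico, one_div] using
                geom_sum_Ico_le_of_lt_one (m := 0) (n := n)
                  (by nlinarith [hy.1, hz.1] : 0 ≤ y * z)
                  (by nlinarith [hy.2, hz.1, hz.2] : y * z < 1)
          _ ≤ 4 / (a + √(1 - z)) ^ 2 / √(1 - z) := by
              gcongr
              exact inv_one_sub_mul_le_four_div_sq hy (Ioo_subset_Icc_self hz)
          _ = 8 * G' z := by
              simp only [G']
              field_simp
              ring
    _ = 8 * (a⁻¹ - (a + 1)⁻¹) := by rw [integral_const_mul, hG'_integral]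
    _ ≤ 8 / a := by
        rw [div_eq_mul_inv]
        gcongr
        linarith [inv_pos.2 (by linarith : 0 < a + 1)]

theorem sum_range_sq_integral_norm_mul_pow_le {E : Type*} [NormedAddCommGroup E] {f : ℝ → E}
    (hf : MemLp f 2 (volume.restrict (Ioo 0 1))) (n : ℕ) :
    ∑ j ∈ Finset.range n, (∫ y in Ioo 0 1, ‖f y‖ * y ^ j) ^ 2 ≤
      8 * ∫ y in Ioo 0 1, ‖f y‖ ^ 2 := by
  have hf2 : IntegrableOn (fun y => ‖f y‖ ^ 2) (Ioo 0 1) :=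
    (memLp_two_iff_integrable_sq_norm hf.1).1 hf
  have hf1 : IntegrableOn (fun y => ‖f y‖) (Ioo 0 1) := (hf.integrable one_le_two).norm
  set B : ℕ → ℝ := fun j => ∫ z in Ioo 0 1, z ^ j / √(1 - z)
  have hA_int : ∀ j : ℕ, IntegrableOn (fun y => ‖f y‖ ^ 2 * (y ^ j * √(1 - y))) (Ioo 0 1) :=
    fun j => hf2.mul_continuousOn_of_subset (by fun_prop) measurableSet_Ioo isCompact_Icc
      Ioo_subset_Icc_self
  have hCS : ∀ j : ℕ, (∫ y in Ioo 0 1, ‖f y‖ * y ^ j) ^ 2 ≤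
      (∫ y in Ioo 0 1, ‖f y‖ ^ 2 * (y ^ j * √(1 - y))) * B j := by
    intro j
    refine sq_integral_le_integral_mul_integral (hf1.mul_continuousOn_of_subset (by fun_prop)
      measurableSet_Ioo isCompact_Icc Ioo_subset_Icc_self) (hA_int j)
      (integrableOn_pow_div_sqrt_one_sub j) ?_ ?_ ?_ <;>
    filter_upwards [ae_restrict_mem measurableSet_Ioo] with y ⟨hy0, hy1⟩
    · have := pow_nonneg hy0.le j
      positivity
    · have := pow_nonneg hy0.le j
      positivity
    · have : √(1 - y) ≠ 0 := (Real.sqrt_pos.2 (by linarith)).ne'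
      field_simp
      exact le_rfl
  calc ∑ j ∈ Finset.range n, (∫ y in Ioo 0 1, ‖f y‖ * y ^ j) ^ 2
      ≤ ∑ j ∈ Finset.range n, (∫ y in Ioo 0 1, ‖f y‖ ^ 2 * (y ^ j * √(1 - y))) * B j :=
        Finset.sum_le_sum fun j _ => hCS j
    _ = ∫ y in Ioo 0 1, ∑ j ∈ Finset.range n, ‖f y‖ ^ 2 * (y ^ j * √(1 - y)) * B j := by
        simp_rw [← integral_mul_const]
        exact (integral_finsetSum _ fun j _ => (hA_int j).mul_const _).symm
    _ ≤ ∫ y in Ioo 0 1, 8 * ‖f y‖ ^ 2 := by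
        refine setIntegral_mono_on (integrable_finsetSum _ fun j _ => (hA_int j).mul_const _)
          (hf2.const_mul 8) measurableSet_Ioo fun y ⟨hy0, hy1⟩ => ?_
        have hy : 0 < √(1 - y) := Real.sqrt_pos.2 (by linarith)
        calc ∑ j ∈ Finset.range n, ‖f y‖ ^ 2 * (y ^ j * √(1 - y)) * B j
            = ‖f y‖ ^ 2 * √(1 - y) * ∑ j ∈ Finset.range n, y ^ j * B j := by
              rw [Finset.mul_sum]
              exact Finset.sum_congr rfl fun j _ => by ring
          _ ≤ ‖f y‖ ^ 2 * √(1 - y) * (8 / √(1 - y)) := by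
              gcongr
              exact sum_range_pow_mul_integral_div_sqrt_le ⟨hy0.le, hy1⟩ n
          _ = 8 * ‖f y‖ ^ 2 := by
              field_simp
    _ = 8 * ∫ y in Ioo 0 1, ‖f y‖ ^ 2 := integral_const_mul _ _

section Series

variable {f : ℝ → ℂ} {x : ℂ}

theorem norm_integral_mul_pow_le (j : ℕ) :
    ‖∫ y in Ioo 0 1, f y * (y : ℂ) ^ j‖ ≤ ∫ y in Ioo 0 1, ‖f y‖ * y ^ j :=
  (norm_integral_le_integral_norm _).trans_eq <| setIntegral_congr_fun measurableSet_Ioo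
    fun y hy => by simp [abs_of_pos hy.1]

theorem memℓp_two_integral_mul_pow (hf : MemLp f 2 (volume.restrict (Ioo 0 1))) :
    Memℓp (fun j : ℕ => ∫ y in Ioo 0 1, f y * (y : ℂ) ^ j) 2 := by
  refine memℓp_gen <| summable_of_sum_range_le (c := 8 * ∫ y in Ioo 0 1, ‖f y‖ ^ 2)
    (fun j => by positivity) fun n => ?_
  simp only [ENNReal.toReal_ofNat, Real.rpow_two]
  exact (Finset.sum_le_sum fun j _ => pow_le_pow_left₀ (norm_nonneg _)
    (norm_integral_mul_pow_le j) 2).trans (sum_range_sq_integral_norm_mul_pow_le hf n)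

theorem norm_mul_ofReal_lt_one (hx : ‖x‖ < 1) {y : ℝ} (hy : y ∈ Icc 0 1) : ‖x * y‖ < 1 := by
  rw [norm_mul, Complex.norm_real, Real.norm_of_nonneg hy.1]
  nlinarith [norm_nonneg x, hy.2]

theorem integral_mul_pow_mul_pow (j : ℕ) :
    (∫ y in Ioo 0 1, f y * (y : ℂ) ^ j) * x ^ j = ∫ y in Ioo 0 1, f y * (x * y) ^ j := by
  rw [← integral_mul_const]
  exact setIntegral_congr_fun measurableSet_Ioo fun y _ => by ring

theorem summable_integral_norm_mul_mul_pow (hf : IntegrableOn f (Ioo 0 1)) (hx : ‖x‖ < 1) :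
    Summable fun j : ℕ => ∫ y in Ioo 0 1, ‖f y * (x * y) ^ j‖ := by
  refine ((summable_geometric_of_lt_one (norm_nonneg x) hx).mul_left
    (∫ y in Ioo 0 1, ‖f y‖)).of_nonneg_of_le (fun j => integral_nonneg fun y => norm_nonneg _)
    fun j => ?_
  rw [← integral_mul_const]
  refine integral_mono_of_nonneg (ae_of_all _ fun y => norm_nonneg _) (hf.norm.mul_const _) ?_
  filter_upwards [ae_restrict_mem measurableSet_Ioo] with y hy
  rw [norm_mul, norm_pow, norm_mul, Complex.norm_real, Real.norm_of_nonneg hy.1.le]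
  gcongr ‖f y‖ * ?_
  exact pow_le_pow_left₀ (mul_nonneg (norm_nonneg x) hy.1.le)
    (mul_le_of_le_one_right (norm_nonneg x) hy.2.le) j

theorem hasSum_integral_mul_pow_mul_pow (hf : IntegrableOn f (Ioo 0 1)) (hx : ‖x‖ < 1) :
    HasSum (fun j : ℕ => (∫ y in Ioo 0 1, f y * (y : ℂ) ^ j) * x ^ j)
      (∫ y in Ioo 0 1, f y / (1 - x * y)) := by
  have hF_int : ∀ j : ℕ, IntegrableOn (fun y : ℝ => f y * (x * y) ^ j) (Ioo 0 1) := fun j =>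
    hf.mul_continuousOn_of_subset (by fun_prop) measurableSet_Ioo isCompact_Icc Ioo_subset_Icc_self
  have hsum_eq :
      ∫ y in Ioo 0 1, ∑' j : ℕ, f y * (x * y) ^ j = ∫ y in Ioo 0 1, f y / (1 - x * y) :=
    setIntegral_congr_fun measurableSet_Ioo fun y hy => by
      rw [tsum_mul_left, tsum_geometric_of_norm_lt_one
        (norm_mul_ofReal_lt_one hx (Ioo_subset_Icc_self hy)), div_eq_mul_inv]
  simpa only [integral_mul_pow_mul_pow, hsum_eq] using
    hasSum_integral_of_summable_integral_norm hF_int (summable_integral_norm_mul_mul_pow hf hx)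

theorem summable_norm_integral_mul_pow_mul_pow (hf : IntegrableOn f (Ioo 0 1)) (hx : ‖x‖ < 1) :
    Summable fun j : ℕ => ‖(∫ y in Ioo 0 1, f y * (y : ℂ) ^ j) * x ^ j‖ :=
  (summable_integral_norm_mul_mul_pow hf hx).of_nonneg_of_le (fun _ => norm_nonneg _)
    fun _ => integral_mul_pow_mul_pow _ ▸ norm_integral_le_integral_norm _

theorem integrableOn_div_one_sub_mul (hf : IntegrableOn f (Ioo 0 1)) (hx : ‖x‖ < 1) :
    IntegrableOn (fun y : ℝ => f y / (1 - x * y)) (Ioo 0 1) := by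
  simp only [div_eq_mul_inv]
  refine hf.mul_continuousOn_of_subset (ContinuousOn.inv₀ (by fun_prop) fun y hy => ?_)
    measurableSet_Ioo isCompact_Icc Ioo_subset_Icc_self
  exact sub_ne_zero.2 fun h => (norm_mul_ofReal_lt_one hx hy).ne (h ▸ norm_one)

end Series

/-- **`FF*` is the integral operator with kernel `1/(1-xy)`.** For `f ∈ L²(0,1)` and
`x ∈ (0,1)`: the moment sequence of `f` is square-summable, the series
`∑ⱼ (∫₀¹ f(y) y^j dy) x^j` converges absolutely, `y ↦ f(y)/(1-xy)` is integrable on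
`(0,1)`, and `∑ⱼ (∫₀¹ f(y) y^j dy) x^j = ∫₀¹ f(y)/(1-xy) dy`. -/
theorem FFstar_eq_integral_operator (f : ℝ → ℂ)
    (hf : MemLp f 2 (volume.restrict (Set.Ioo (0 : ℝ) 1)))
    (x : ℝ) (hx : x ∈ Set.Ioo (0 : ℝ) 1) :
    Memℓp (fun j : ℕ => ∫ y in Set.Ioo (0 : ℝ) 1, f y * (y : ℂ) ^ j) 2 ∧
    Summable (fun j : ℕ =>
      ‖(∫ y in Set.Ioo (0 : ℝ) 1, f y * (y : ℂ) ^ j) * (x : ℂ) ^ j‖) ∧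
    IntegrableOn (fun y : ℝ => f y / (1 - (x : ℂ) * (y : ℂ))) (Set.Ioo 0 1) ∧
    ∑' j : ℕ, (∫ y in Set.Ioo (0 : ℝ) 1, f y * (y : ℂ) ^ j) * (x : ℂ) ^ j =
      ∫ y in Set.Ioo (0 : ℝ) 1, f y / (1 - (x : ℂ) * (y : ℂ)) := by
  have hf1 : IntegrableOn f (Ioo 0 1) := hf.integrable one_le_two
  have hx1 : ‖(x : ℂ)‖ < 1 := by rw [Complex.norm_real, Real.norm_of_nonneg hx.1.le]; exact hx.2
  exact ⟨memℓp_two_integral_mul_pow hf, summable_norm_integral_mul_pow_mul_pow hf1 hx1,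
    integrableOn_div_one_sub_mul hf1 hx1, (hasSum_integral_mul_pow_mul_pow hf1 hx1).tsum_eq⟩
end

section
/- Let μ be a finite positive Borel measure on ℝ with support contained in [−1, 1], and let w = (w_j)_{j∈ℕ} be strictly positive weights with ∑_{j∈ℕ} 1/w_j < ∞. Then for every φ ∈ L²(μ) and every x ∈ [−1, 1]: the series ∑_{k=0}^∞ (1/w_k)·(∫ y^k φ(y) dμ(y))·x^k converges absolutely, the kernel k(x,y) = ∑_{k=0}^∞ (x·y)^k / w_k converges for all y ∈ [−1,1], the function y ↦ φ(y)·k(x,y) is μ-integrable, and ∑_{k=0}^∞ (1/w_k) (∫ y^k φ(y) dμ(y)) x^k = ∫ φ(y) (∑_{k=0}^∞ (xy)^k / w_k) dμ(y). That is, FF*_w is the integral operator on L²(μ) with kernel k(x,y) = ∑_k (xy)^k/w_k. -/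
/-!
Since `|xy| ≤ 1` on the support of `μ`, the `k`-th term `φ(y) (xy)^k / w_k` of the kernel
expansion is dominated by `|φ(y)| / w_k`, and `∑ₖ ∫ |φ| / w_k < ∞` because `φ ∈ L²(μ) ⊆ L¹(μ)`.
Dominated convergence for series then lets the sum be taken out of the integral, and the
`k`-th integral is `(1/w_k) (∫ y^k φ dμ) x^k`.
-/

open MeasureTheory

section SeriesOfFunctions

variable {α E : Type*} [MeasurableSpace α] {μ : Measure α} [NormedAddCommGroup E]
  {F : ℕ → α → E} {c : ℕ → ℝ} {g : α → ℝ}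

theorem ae_summable_of_norm_le_mul [CompleteSpace E] (hc : Summable c)
    (hFg : ∀ k, ∀ᵐ a ∂μ, ‖F k a‖ ≤ c k * g a) :
    ∀ᵐ a ∂μ, Summable fun k => F k a := by
  filter_upwards [ae_all_iff.mpr hFg] with a ha
  exact (hc.mul_right (g a)).of_norm_bounded ha

theorem integrable_tsum_of_norm_le_mul [CompleteSpace E]
    (hF : ∀ k, AEStronglyMeasurable (F k) μ)
    (hc : Summable c) (hg : Integrable g μ) (hFg : ∀ k, ∀ᵐ a ∂μ, ‖F k a‖ ≤ c k * g a) :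
    Integrable (fun a => ∑' k, F k a) μ := by
  have hmeas : AEStronglyMeasurable (fun a => ∑' k, F k a) μ := by
    refine aestronglyMeasurable_of_tendsto_ae Filter.atTop
      (fun n => Finset.aestronglyMeasurable_fun_sum (Finset.range n) fun k _ => hF k) ?_
    filter_upwards [ae_summable_of_norm_le_mul hc hFg] with a ha
    exact ha.hasSum.tendsto_sum_nat
  refine (hg.const_mul (∑' k, c k)).mono' hmeas ?_
  filter_upwards [ae_all_iff.mpr hFg] with a ha
  rw [← tsum_mul_right]
  exact tsum_of_norm_bounded (hc.mul_right (g a)).hasSum ha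

theorem hasSum_integral_of_norm_le_mul [NormedSpace ℝ E] [CompleteSpace E]
    (hF : ∀ k, AEStronglyMeasurable (F k) μ)
    (hc : Summable c) (hg : Integrable g μ) (hFg : ∀ k, ∀ᵐ a ∂μ, ‖F k a‖ ≤ c k * g a) :
    HasSum (fun k => ∫ a, F k a ∂μ) (∫ a, ∑' k, F k a ∂μ) := by
  refine hasSum_integral_of_dominated_convergence (fun k a => c k * g a) hF hFg
    (ae_of_all _ fun a => hc.mul_right (g a)) ?_ ?_
  · simpa only [tsum_mul_right] using hg.const_mul (∑' k, c k)
  · filter_upwards [ae_summable_of_norm_le_mul hc hFg] with a ha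
    exact ha.hasSum

theorem summable_norm_integral_of_norm_le_mul [NormedSpace ℝ E] (hc : Summable c)
    (hg : Integrable g μ)
    (hFg : ∀ k, ∀ᵐ a ∂μ, ‖F k a‖ ≤ c k * g a) :
    Summable fun k => ‖∫ a, F k a ∂μ‖ := by
  refine (hc.mul_right (∫ a, g a ∂μ)).of_norm_bounded fun k => ?_
  rw [norm_norm, ← integral_const_mul]
  exact norm_integral_le_of_norm_le (hg.const_mul (c k)) (hFg k)

end SeriesOfFunctions

theorem abs_pow_div_le_one_div {t v : ℝ} (ht : |t| ≤ 1) (hv : 0 < v) (k : ℕ) :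
    |t ^ k / v| ≤ 1 / v := by
  rw [abs_div, abs_pow, abs_of_pos hv]
  gcongr
  exact pow_le_one₀ (abs_nonneg t) ht

theorem summable_pow_div_of_abs_le_one {w : ℕ → ℝ} (hw : ∀ k, 0 < w k)
    (hws : Summable fun k => 1 / w k) {t : ℝ} (ht : |t| ≤ 1) : Summable fun k => t ^ k / w k :=
  hws.of_norm_bounded fun k => abs_pow_div_le_one_div ht (hw k) k

/-- **`FF*_w` is an integral operator.** For a finite measure `μ` supported in
`[-1,1]`, strictly positive weights `w` with `∑ 1/w_k < ∞`, `φ ∈ L²(μ)` and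
`x ∈ [-1,1]`: the series `∑ₖ (1/wₖ)(∫ y^k φ dμ) x^k` converges absolutely, the
kernel `k(x,y) = ∑ₖ (xy)^k/wₖ` converges for `y ∈ [-1,1]`, `y ↦ φ(y) k(x,y)` is
`μ`-integrable, and `∑ₖ (1/wₖ)(∫ y^k φ dμ) x^k = ∫ φ(y) k(x,y) dμ(y)`. -/
theorem FFstar_weighted_integral_operator (μ : Measure ℝ) [IsFiniteMeasure μ]
    (hsupp : μ (Set.Icc (-1 : ℝ) 1)ᶜ = 0)
    (w : ℕ → ℝ) (hw : ∀ k, 0 < w k) (hws : Summable fun k : ℕ => 1 / w k)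
    (φ : ℝ → ℝ) (hφ : MemLp φ 2 μ) (x : ℝ) (hx : x ∈ Set.Icc (-1 : ℝ) 1) :
    Summable (fun k : ℕ => |(1 / w k) * (∫ y, y ^ k * φ y ∂μ) * x ^ k|) ∧
    (∀ y ∈ Set.Icc (-1 : ℝ) 1, Summable fun k : ℕ => (x * y) ^ k / w k) ∧
    Integrable (fun y => φ y * ∑' k : ℕ, (x * y) ^ k / w k) μ ∧
    ∑' k : ℕ, (1 / w k) * (∫ y, y ^ k * φ y ∂μ) * x ^ k =
      ∫ y, φ y * ∑' k : ℕ, (x * y) ^ k / w k ∂μ := by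
  have habs {y : ℝ} (hy : y ∈ Set.Icc (-1 : ℝ) 1) : |y| ≤ 1 := abs_le.mpr hy
  have hxy {y : ℝ} (hy : y ∈ Set.Icc (-1 : ℝ) 1) : |x * y| ≤ 1 := by
    rw [abs_mul]
    exact mul_le_one₀ (habs hx) (abs_nonneg y) (habs hy)
  set F : ℕ → ℝ → ℝ := fun k y => φ y * ((x * y) ^ k / w k)
  have hφint : Integrable φ μ := hφ.integrable one_le_two
  have hF : ∀ k, AEStronglyMeasurable (F k) μ := fun k =>
    hφ.aestronglyMeasurable.mul
      (by fun_prop : Continuous fun y => (x * y) ^ k / w k).aestronglyMeasurable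
  have hFg : ∀ k, ∀ᵐ y ∂μ, ‖F k y‖ ≤ 1 / w k * |φ y| := fun k => by
    filter_upwards [ae_iff.mpr hsupp] with y hy
    rw [Real.norm_eq_abs, abs_mul, mul_comm]
    gcongr
    exact abs_pow_div_le_one_div (hxy hy) (hw k) k
  have hintegral (k : ℕ) : ∫ y, F k y ∂μ = (1 / w k) * (∫ y, y ^ k * φ y ∂μ) * x ^ k := by
    have : F k = fun y => (1 / w k * x ^ k) * (y ^ k * φ y) := by
      funext y
      simp only [F]
      ring
    rw [this, integral_const_mul]
    ring
  have hkernel : ∀ y, φ y * ∑' k, (x * y) ^ k / w k = ∑' k, F k y := fun y => tsum_mul_left.symm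
  simp only [← hintegral, ← Real.norm_eq_abs, hkernel]
  exact ⟨summable_norm_integral_of_norm_le_mul hws hφint.abs hFg,
    fun y hy => summable_pow_div_of_abs_le_one hw hws (hxy hy),
    integrable_tsum_of_norm_le_mul hF hws hφint.abs hFg,
    (hasSum_integral_of_norm_le_mul hF hws hφint.abs hFg).tsum_eq⟩
end

section
/- Let t > 1 and let μ be the positive Borel measure on ℝ given by dμ(x) = B(x) dx, where B is a nonnegative, essentially bounded measurable function vanishing outside [−t, t]. Then for every φ ∈ L²(μ): ∑_{k=0}^∞ t^{−2k} · |∫_{−t}^{t} x^k φ(x) B(x) dx|² ≤ t·π·‖B‖_∞ · ∫_{−t}^{t} |φ(x)|² B(x) dx. Consequently, with weights w_k = t^{2k}, the operators F, F*_w, F*_w F and F F*_w are all bounded, with ‖F F*_w‖ = ‖F*_w F‖ ≤ t·π·‖B‖_∞. -/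
/-!
With `c_k = ∫ x^k φ dμ` and `P = ∑_{k<n} t^{-2k} c_k x^k`, the `n`-th partial sum is `∫ φ P dμ`,
so by Cauchy–Schwarz it is bounded by `‖φ‖ ‖P‖` in `L²(μ)`: boundedness of `F*_w` follows from
that of `F`, i.e. from `∫ P² dμ ≤ t π ‖B‖_∞ ∑ t^{2k} a_k²` for `P = ∑ a_k x^k`. As `dμ ≤ ‖B‖_∞ dx`
on `[-t, t]`, this is the Fejér–Riesz type inequality `∫_{-t}^t P² dx ≤ π t ∑ t^{2k} a_k²`, which
replaces the Hilbert matrix bound: a primitive of `P²` moves the integral over `[-t, t]` to the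
upper half circle of radius `t`, where `∫_0^π |P(t e^{iθ})|² dθ = π ∑ t^{2k} a_k²` because the
`cos (mθ)`, `m ≠ 0`, integrate to zero over `[0, π]`.
-/

open MeasureTheory Finset Real

theorem sq_integral_mul_le_integral_sq_mul_integral_sq {α : Type*} [MeasurableSpace α]
    {μ : Measure α} {f g : α → ℝ} (hf : MemLp f 2 μ) (hg : MemLp g 2 μ) :
    (∫ x, f x * g x ∂μ) ^ 2 ≤ (∫ x, f x ^ 2 ∂μ) * ∫ x, g x ^ 2 ∂μ := by
  have hfg : Integrable (fun x => f x * g x) μ := hf.integrable_mul hg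
  have hquad : ∀ s : ℝ, 0 ≤ (∫ x, f x ^ 2 ∂μ) * (s * s) + 2 * (∫ x, f x * g x ∂μ) * s +
      ∫ x, g x ^ 2 ∂μ := fun s => by
    have hexpand : ∫ x, (s * s * f x ^ 2 + 2 * s * (f x * g x) + g x ^ 2) ∂μ =
        (∫ x, f x ^ 2 ∂μ) * (s * s) + 2 * (∫ x, f x * g x ∂μ) * s + ∫ x, g x ^ 2 ∂μ := by
      rw [integral_add ?_ hg.integrable_sq,
        integral_add (hf.integrable_sq.const_mul _) (hfg.const_mul _), integral_const_mul,
        integral_const_mul]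
      · ring
      · exact (hf.integrable_sq.const_mul _).add (hfg.const_mul _)
    rw [← hexpand]
    exact integral_nonneg fun x => (sq_nonneg (s * f x + g x)).trans_eq (by ring)
  have hdiscrim := discrim_le_zero hquad
  rw [discrim] at hdiscrim
  linarith

theorem sum_one_div_mul_sq_integral_le_of_integral_sq_sum_le {α : Type*} [MeasurableSpace α]
    {μ : Measure α} {g : ℕ → α → ℝ} {w : ℕ → ℝ} {K : ℝ} {n : ℕ} (hK : 0 ≤ K)
    (hg : ∀ k, MemLp (g k) 2 μ)
    (hsynth : ∀ a : ℕ → ℝ,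
      ∫ x, (∑ k ∈ range n, a k * g k x) ^ 2 ∂μ ≤ K * ∑ k ∈ range n, w k * a k ^ 2)
    {f : α → ℝ} (hf : MemLp f 2 μ) :
    ∑ k ∈ range n, 1 / w k * (∫ x, g k x * f x ∂μ) ^ 2 ≤ K * ∫ x, f x ^ 2 ∂μ := by
  set c : ℕ → ℝ := fun k => ∫ x, g k x * f x ∂μ
  set S := ∑ k ∈ range n, 1 / w k * c k ^ 2
  -- `S = ∫ G f`, so Cauchy–Schwarz and `hsynth` give `S ^ 2 ≤ K * S * ∫ f ^ 2`.
  set G : α → ℝ := fun x => ∑ k ∈ range n, c k / w k * g k x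
  have hG : MemLp G 2 μ := memLp_finsetSum _ fun k _ => (hg k).const_mul _
  have hS_eq : S = ∫ x, G x * f x ∂μ := by
    simp_rw [G, Finset.sum_mul, mul_assoc]
    rw [integral_finsetSum _ fun k _ => ?_]
    · refine Finset.sum_congr rfl fun k _ => ?_
      rw [integral_const_mul]
      ring
    · exact ((hg k).integrable_mul hf).const_mul _
  have hG_sq : ∫ x, G x ^ 2 ∂μ ≤ K * S := by
    refine (hsynth _).trans_eq (congrArg (K * ·) (Finset.sum_congr rfl fun k _ => ?_))
    rcases eq_or_ne (w k) 0 with hw | hw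
    · simp [hw]
    · field_simp
  have hCS := sq_integral_mul_le_integral_sq_mul_integral_sq hG hf
  rw [← hS_eq] at hCS
  have hA : 0 ≤ ∫ x, f x ^ 2 ∂μ := integral_nonneg fun x => sq_nonneg _
  rcases le_or_gt S 0 with hS | hS
  · exact hS.trans (mul_nonneg hK hA)
  · nlinarith

theorem integral_cos_int_mul (m : ℤ) :
    ∫ θ in (0 : ℝ)..π, cos (m * θ) = if m = 0 then π else 0 := by
  split_ifs with hm
  · simp [hm]
  · have hm' : (m : ℝ) ≠ 0 := Int.cast_ne_zero.2 hm
    rw [intervalIntegral.integral_comp_mul_left (fun θ => cos θ) hm', integral_cos,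
      sin_int_mul_pi]
    simp

section FejerRiesz

variable (a : ℕ → ℝ) (n : ℕ)

theorem norm_sq_sum_mul_exp (t θ : ℝ) :
    ‖∑ k ∈ range n, (a k : ℂ) * (t * Complex.exp (θ * Complex.I)) ^ k‖ ^ 2 =
      ∑ j ∈ range n, ∑ k ∈ range n, a j * a k * t ^ (j + k) * cos (((j : ℤ) - k : ℤ) * θ) := by
  have hterm : ∀ k : ℕ, (a k : ℂ) * (t * Complex.exp (θ * Complex.I)) ^ k =
      (a k * t ^ k : ℝ) * Complex.exp ((k * θ : ℝ) * Complex.I) := fun k => by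
    rw [mul_pow, ← Complex.exp_nat_mul]
    push_cast
    ring_nf
  simp_rw [hterm, Complex.sq_norm, Complex.normSq_apply, Complex.re_sum, Complex.im_sum,
    Complex.re_ofReal_mul, Complex.im_ofReal_mul, Complex.exp_ofReal_mul_I_re,
    Complex.exp_ofReal_mul_I_im, sum_mul_sum, ← sum_add_distrib]
  refine sum_congr rfl fun j _ => sum_congr rfl fun k _ => ?_
  push_cast
  rw [sub_mul, cos_sub]
  ring

theorem integral_norm_sq_sum_mul_exp (t : ℝ) :
    ∫ θ in (0 : ℝ)..π, ‖∑ k ∈ range n, (a k : ℂ) * (t * Complex.exp (θ * Complex.I)) ^ k‖ ^ 2 =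
      π * ∑ k ∈ range n, t ^ (2 * k) * a k ^ 2 := by
  have hcont : ∀ j k : ℕ, Continuous fun θ : ℝ =>
      a j * a k * t ^ (j + k) * cos (((j : ℤ) - k : ℤ) * θ) := fun j k => by fun_prop
  rw [intervalIntegral.integral_congr fun θ _ => norm_sq_sum_mul_exp a n t θ,
    intervalIntegral.integral_finsetSum fun j _ =>
      (continuous_finsetSum _ fun k _ => hcont j k).intervalIntegrable _ _, mul_sum]
  refine sum_congr rfl fun j hj => ?_
  rw [intervalIntegral.integral_finsetSum fun k _ => (hcont j k).intervalIntegrable _ _]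
  simp_rw [intervalIntegral.integral_const_mul, integral_cos_int_mul, sub_eq_zero, Nat.cast_inj,
    mul_ite, mul_zero, sum_ite_eq, if_pos hj]
  ring

theorem hasDerivAt_sum_sum_pow_div (z : ℂ) :
    HasDerivAt (fun z : ℂ => ∑ j ∈ range n, ∑ k ∈ range n,
        (a j * a k / (j + k + 1) : ℂ) * z ^ (j + k + 1))
      ((∑ k ∈ range n, (a k : ℂ) * z ^ k) ^ 2) z := by
  have hpow : ∀ m : ℕ, HasDerivAt (fun z : ℂ => z ^ (m + 1) / (m + 1)) (z ^ m) z := fun m =>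
    ((hasDerivAt_pow (m + 1) z).div_const _).congr_deriv <| by
      rw [Nat.add_sub_cancel, Nat.cast_succ, mul_div_cancel_left₀ _ (Nat.cast_add_one_ne_zero m)]
  have hsum := HasDerivAt.fun_sum (u := range n) fun j _ => HasDerivAt.fun_sum (u := range n)
    fun k _ => (hpow (j + k)).const_mul ((a j * a k : ℝ) : ℂ)
  rw [sq, sum_mul_sum]
  refine (hsum.congr_deriv ?_).congr_of_eventuallyEq (Filter.Eventually.of_forall fun y => ?_)
  all_goals
    refine sum_congr rfl fun j _ => sum_congr rfl fun k _ => ?_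
    push_cast
    ring

theorem integral_sq_sum_pow_le {t : ℝ} (ht : 0 ≤ t) :
    ∫ x in -t..t, (∑ k ∈ range n, a k * x ^ k) ^ 2 ≤
      π * t * ∑ k ∈ range n, t ^ (2 * k) * a k ^ 2 := by
  set P : ℂ → ℂ := fun z => ∑ k ∈ range n, (a k : ℂ) * z ^ k
  set Q : ℂ → ℂ := fun z => ∑ j ∈ range n, ∑ k ∈ range n,
    (a j * a k / (j + k + 1) : ℂ) * z ^ (j + k + 1)
  set γ : ℝ → ℂ := fun θ => t * Complex.exp (θ * Complex.I)
  have hP : Continuous P := by fun_prop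
  have hγc : Continuous γ := by fun_prop
  have hγ : ∀ θ : ℝ, HasDerivAt γ (γ θ * Complex.I) θ := fun θ => by
    simpa [γ, mul_assoc] using
      (((hasDerivAt_id θ).ofReal_comp.mul_const Complex.I).cexp.const_mul (t : ℂ))
  have hsegment : ((∫ x in -t..t, (∑ k ∈ range n, a k * x ^ k) ^ 2 : ℝ) : ℂ) =
      Q t - Q (-t) := by
    rw [← intervalIntegral.integral_ofReal]
    push_cast
    rw [intervalIntegral.integral_eq_sub_of_hasDerivAt
      (fun x _ => (hasDerivAt_sum_sum_pow_div a n x).comp_ofReal)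
      (((hP.comp Complex.continuous_ofReal).pow 2).intervalIntegrable _ _), Complex.ofReal_neg]
  have harc : Q (-t) - Q t = ∫ θ in (0 : ℝ)..π, P (γ θ) ^ 2 * (γ θ * Complex.I) := by
    have hends : γ π = -t ∧ γ 0 = t := by simp [γ, Complex.exp_pi_mul_I]
    rw [intervalIntegral.integral_eq_sub_of_hasDerivAt
      (fun θ _ => (hasDerivAt_sum_sum_pow_div a n (γ θ)).comp θ (hγ θ))
      ((((hP.comp hγc).pow 2).mul (hγc.mul continuous_const)).intervalIntegrable _ _),
      Function.comp_apply, Function.comp_apply, hends.1, hends.2]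
  have hnorm : ∀ θ : ℝ, ‖P (γ θ) ^ 2 * (γ θ * Complex.I)‖ = t * ‖P (γ θ)‖ ^ 2 := fun θ => by
    simp [γ, abs_of_nonneg ht, mul_comm]
  calc ∫ x in -t..t, (∑ k ∈ range n, a k * x ^ k) ^ 2
      ≤ ‖((∫ x in -t..t, (∑ k ∈ range n, a k * x ^ k) ^ 2 : ℝ) : ℂ)‖ := by
        rw [Complex.norm_real]; exact le_abs_self _
    _ = ‖∫ θ in (0 : ℝ)..π, P (γ θ) ^ 2 * (γ θ * Complex.I)‖ := by
        rw [hsegment, ← harc, norm_sub_rev]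
    _ ≤ ∫ θ in (0 : ℝ)..π, t * ‖P (γ θ)‖ ^ 2 := by
        refine intervalIntegral.norm_integral_le_of_norm_le pi_pos.le
          (Filter.Eventually.of_forall fun θ _ => (hnorm θ).le) ?_
        exact (continuous_const.mul ((hP.comp hγc).norm.pow 2)).intervalIntegrable _ _
    _ = π * t * ∑ k ∈ range n, t ^ (2 * k) * a k ^ 2 := by
        rw [intervalIntegral.integral_const_mul, integral_norm_sq_sum_mul_exp]
        ring

end FejerRiesz

theorem integral_withDensity_ofReal {α : Type*} [MeasurableSpace α] {μ : Measure α}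
    {B : α → ℝ} (hB : Measurable B) (hB0 : ∀ x, 0 ≤ B x) (f : α → ℝ) :
    ∫ x, f x ∂μ.withDensity (fun x => ENNReal.ofReal (B x)) = ∫ x, f x * B x ∂μ := by
  rw [integral_withDensity_eq_integral_toReal_smul hB.ennreal_ofReal
    (Filter.Eventually.of_forall fun _ => ENNReal.ofReal_lt_top)]
  simp_rw [ENNReal.toReal_ofReal (hB0 _), smul_eq_mul, mul_comm]

theorem integral_mul_le_mul_integral_of_ae_le {B h : ℝ → ℝ} {a b C : ℝ} (hab : a ≤ b)
    (hB0 : ∀ x, 0 ≤ B x) (hBsupp : ∀ x, x ∉ Set.Icc a b → B x = 0) (hBC : ∀ᵐ x, B x ≤ C)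
    (hh : Continuous h) (hh0 : ∀ x, 0 ≤ h x) :
    ∫ x, h x * B x ≤ C * ∫ x in a..b, h x := by
  calc ∫ x, h x * B x = ∫ x in Set.Icc a b, h x * B x :=
        (setIntegral_eq_integral_of_forall_compl_eq_zero fun x hx => by simp [hBsupp x hx]).symm
    _ ≤ ∫ x in Set.Icc a b, C * h x := by
        refine integral_mono_of_nonneg
          (Filter.Eventually.of_forall fun x => mul_nonneg (hh0 x) (hB0 x))
          (hh.integrableOn_Icc.const_mul C) (ae_restrict_of_ae (hBC.mono fun x hx => ?_))
        exact (mul_le_mul_of_nonneg_left hx (hh0 x)).trans_eq (mul_comm _ _)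
    _ = C * ∫ x in a..b, h x := by
        rw [integral_const_mul, intervalIntegral.integral_of_le hab, integral_Icc_eq_integral_Ioc]

theorem Continuous.memLp_withDensity_ofReal {B h : ℝ → ℝ} {a b C : ℝ} (hB : Measurable B)
    (hB0 : ∀ x, 0 ≤ B x) (hBsupp : ∀ x, x ∉ Set.Icc a b → B x = 0) (hBC : ∀ᵐ x, B x ≤ C)
    (hh : Continuous h) (p : ENNReal) :
    MemLp h p (volume.withDensity fun x => ENNReal.ofReal (B x)) := by
  have hB_int : Integrable B := by
    refine Integrable.mono' ((integrableOn_const (s := Set.Icc a b) (C := C)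
      measure_Icc_lt_top.ne).integrable_indicator measurableSet_Icc)
      hB.aestronglyMeasurable (hBC.mono fun x hx => ?_)
    by_cases hxI : x ∈ Set.Icc a b
    · simpa [Set.indicator_of_mem hxI, abs_of_nonneg (hB0 x)] using hx
    · simp [Set.indicator_of_notMem hxI, hBsupp x hxI]
  have : IsFiniteMeasure (volume.withDensity fun x => ENNReal.ofReal (B x)) :=
    isFiniteMeasure_withDensity_ofReal hB_int.hasFiniteIntegral
  obtain ⟨M, hM⟩ := (isCompact_Icc (a := a) (b := b)).exists_bound_of_continuousOn hh.continuousOn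
  refine MemLp.of_bound hh.aestronglyMeasurable M <|
    (ae_withDensity_iff hB.ennreal_ofReal).2 <| Filter.Eventually.of_forall fun x hx => hM x ?_
  by_contra hxI
  exact hx (by simp [hBsupp x hxI])

/-- **Boundedness of the weighted moment operator for `dμ = B(x) dx`.** Let `t > 1`,
let `B` be a nonnegative measurable function vanishing outside `[-t,t]` and
essentially bounded by `C`, and `dμ = B dx`.  Then for every `φ ∈ L²(μ)`,
`∑ₖ t^{-2k} |∫ x^k φ B dx|² ≤ t π ‖B‖_∞ ∫ |φ|² B dx`; i.e. `F`, `F*_w`, `F*_w F`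
and `F F*_w` are bounded for the weights `w_k = t^{2k}`, with
`‖F F*_w‖ = ‖F*_w F‖ ≤ t π ‖B‖_∞`. -/
theorem weighted_moment_operator_bounded (t : ℝ) (ht : 1 < t)
    (B : ℝ → ℝ) (hBmeas : Measurable B) (hBnonneg : ∀ x, 0 ≤ B x)
    (hBsupp : ∀ x, x ∉ Set.Icc (-t) t → B x = 0)
    (C : ℝ) (hC : ∀ᵐ x ∂(volume : Measure ℝ), B x ≤ C)
    (φ : ℝ → ℝ)
    (hφ : MemLp φ 2 (volume.withDensity fun x => ENNReal.ofReal (B x))) :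
    Summable (fun k : ℕ => (1 / t ^ (2 * k)) * (∫ x, x ^ k * φ x * B x) ^ 2) ∧
    ∑' k : ℕ, (1 / t ^ (2 * k)) * (∫ x, x ^ k * φ x * B x) ^ 2 ≤
      t * Real.pi * C * ∫ x, φ x ^ 2 * B x := by
  have ht0 : 0 < t := one_pos.trans ht
  have hC0 : 0 ≤ C := hC.exists.elim fun x hx => (hBnonneg x).trans hx
  have hsynth : ∀ (n : ℕ) (a : ℕ → ℝ),
      ∫ x, (∑ k ∈ range n, a k * x ^ k) ^ 2 ∂volume.withDensity (fun x => ENNReal.ofReal (B x))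
        ≤ t * π * C * ∑ k ∈ range n, t ^ (2 * k) * a k ^ 2 := fun n a => by
    rw [integral_withDensity_ofReal hBmeas hBnonneg]
    calc _ ≤ C * ∫ x in -t..t, (∑ k ∈ range n, a k * x ^ k) ^ 2 :=
          integral_mul_le_mul_integral_of_ae_le (by linarith) hBnonneg hBsupp hC (by fun_prop)
            fun x => sq_nonneg _
      _ ≤ C * (π * t * ∑ k ∈ range n, t ^ (2 * k) * a k ^ 2) :=
          mul_le_mul_of_nonneg_left (integral_sq_sum_pow_le a n ht0.le) hC0
      _ = _ := by ring
  have hpartial : ∀ n : ℕ, ∑ k ∈ range n, 1 / t ^ (2 * k) * (∫ x, x ^ k * φ x * B x) ^ 2 ≤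
      t * π * C * ∫ x, φ x ^ 2 * B x := fun n => by
    simpa only [integral_withDensity_ofReal hBmeas hBnonneg] using
      sum_one_div_mul_sq_integral_le_of_integral_sq_sum_le (by positivity)
        (fun k => (continuous_pow k).memLp_withDensity_ofReal hBmeas hBnonneg hBsupp hC 2)
        (hsynth n) hφ
  have hnonneg : ∀ k : ℕ, 0 ≤ 1 / t ^ (2 * k) * (∫ x, x ^ k * φ x * B x) ^ 2 :=
    fun k => by positivity
  exact ⟨summable_of_sum_range_le hnonneg hpartial, Real.tsum_le_of_sum_range_le hnonneg hpartial⟩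
end

section
/- Let b, c ∈ ℂ satisfy |c| ≤ |b| < 1/4, and let A be the infinite matrix with entries A_{k,j} = binom(j,k) · c^k · b^{j−k} for 0 ≤ k ≤ j and A_{k,j} = 0 for k > j. Then ∑_{j=0}^∞ ∑_{k=0}^{j} binom(j,k)² · |c|^{2k} · |b|^{2(j−k)} < ∞; that is, the entries of A are square-summable, so A defines a Hilbert–Schmidt (in particular bounded) operator on ℓ², with trace(A*A) ≤ ∑_{j=0}^∞ |b|^{2j} binom(2j, j) < ∞. -/
/-! Since `‖c‖ ≤ ‖b‖`, the `j`-th row sum is at most `‖b‖^(2j) ∑ₖ binom(j,k)² = ‖b‖^(2j) binom(2j,j)`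
(Vandermonde), and `binom(2j,j) ≤ 4^j` dominates this majorant by the geometric series of
ratio `4‖b‖² < 1`. -/

open Finset

theorem sum_choose_sq_mul_pow_le {R : Type*} [CommSemiring R] [PartialOrder R] [IsOrderedRing R]
    {r s : R} (hs : 0 ≤ s) (hsr : s ≤ r) (j : ℕ) :
    ∑ k ∈ range (j + 1), (j.choose k : R) ^ 2 * s ^ (2 * k) * r ^ (2 * (j - k)) ≤
      r ^ (2 * j) * ((2 * j).choose j : R) := by
  have hr : 0 ≤ r := hs.trans hsr
  calc ∑ k ∈ range (j + 1), (j.choose k : R) ^ 2 * s ^ (2 * k) * r ^ (2 * (j - k))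
      ≤ ∑ k ∈ range (j + 1), (j.choose k : R) ^ 2 * r ^ (2 * k) * r ^ (2 * (j - k)) := by
        gcongr
    _ = ∑ k ∈ range (j + 1), (j.choose k : R) ^ 2 * r ^ (2 * j) := by
        refine sum_congr rfl fun k hk => ?_
        rw [mul_assoc, ← pow_add, ← mul_add, Nat.add_sub_cancel' (mem_range_succ_iff.mp hk)]
    _ = r ^ (2 * j) * ((2 * j).choose j : R) := by
        rw [← sum_mul, mul_comm, ← Nat.sum_range_choose_sq]
        norm_cast

theorem summable_mul_centralBinom {x : ℝ} (hx : |x| < 1 / 4) :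
    Summable fun j : ℕ => x ^ j * (j.centralBinom : ℝ) := by
  refine .of_norm_bounded (g := fun j : ℕ => (4 * |x|) ^ j)
    (summable_geometric_of_lt_one (by positivity) (by linarith)) fun j => ?_
  rw [norm_mul, norm_pow, Real.norm_eq_abs, RCLike.norm_natCast, mul_pow, mul_comm]
  gcongr
  exact_mod_cast Nat.centralBinom_le_four_pow j

/-- **Hilbert–Schmidt property of the affine encoding matrix.** If `|c| ≤ |b| < 1/4`,
the matrix `A` with entries `A_{k,j} = binom(j,k) c^k b^(j-k)` (for `k ≤ j`, zero
otherwise) has square-summable entries: the diagonal sums of `A*A` are summable, so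
`A` is Hilbert–Schmidt, with trace `trace(A*A) ≤ ∑ⱼ |b|^{2j} binom(2j,j) < ∞`. -/
theorem affine_encoding_matrix_hilbertSchmidt (b c : ℂ)
    (hcb : ‖c‖ ≤ ‖b‖) (hb : ‖b‖ < 1 / 4) :
    Summable (fun j : ℕ => ∑ k ∈ Finset.range (j + 1),
      (j.choose k : ℝ) ^ 2 * ‖c‖ ^ (2 * k) *
        ‖b‖ ^ (2 * (j - k))) ∧
    Summable (fun j : ℕ => ‖b‖ ^ (2 * j) * ((2 * j).choose j : ℝ)) ∧
    (∑' j : ℕ, ∑ k ∈ Finset.range (j + 1),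
      (j.choose k : ℝ) ^ 2 * ‖c‖ ^ (2 * k) *
        ‖b‖ ^ (2 * (j - k))) ≤
      ∑' j : ℕ, ‖b‖ ^ (2 * j) * ((2 * j).choose j : ℝ) := by
  have hmajorant := sum_choose_sq_mul_pow_le (norm_nonneg c) hcb
  have hsq : |‖b‖ ^ 2| < 1 / 4 := by
    rw [abs_of_nonneg (by positivity)]
    nlinarith [norm_nonneg b]
  have hcentral : Summable fun j : ℕ => ‖b‖ ^ (2 * j) * ((2 * j).choose j : ℝ) := by
    simpa only [pow_mul, Nat.centralBinom_eq_two_mul_choose] using summable_mul_centralBinom hsq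
  have hrows : Summable fun j : ℕ => ∑ k ∈ range (j + 1),
      (j.choose k : ℝ) ^ 2 * ‖c‖ ^ (2 * k) * ‖b‖ ^ (2 * (j - k)) :=
    hcentral.of_nonneg_of_le (fun j => by positivity) hmajorant
  exact ⟨hrows, hcentral, hrows.tsum_le_tsum hmajorant hcentral⟩
end

section
/- Let M be an infinite real Hankel matrix, given by a sequence m : ℕ → ℝ via M_{j,k} = m_{j+k}, which is positive definite (∑_{i,j} c_i m_{i+j} c_j > 0 for every nonzero finitely supported real sequence c) and normalized so that m_0 = 1. Then there exist real sequences (a_n)_{n∈ℕ} and (b_n)_{n∈ℕ} such that, defining the tridiagonal (Jacobi) action on finitely supported sequences v : ℕ → ℝ by (T v)_n = a_{n−1} v_{n−1} + b_n v_n + a_n v_{n+1} (with the convention a_{−1} v_{−1} = 0), one has M_{j,k} = (T^{j+k} δ₀)(0) for all j, k ∈ ℕ, where δ₀ is the sequence (1, 0, 0, …). That is, every normalized positive definite Hankel matrix is of T-class with T a banded symmetric tridiagonal matrix. -/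
/-!
Positive definiteness of the Hankel matrix makes `⟪p, q⟫ = L (p * q)`, where `L (X ^ n) = m n`,
an inner product on `ℝ[X]`. Multiplication by `X` is symmetric for it and raises degrees by one,
so in the orthonormal basis obtained from `1, X, X², …` by Gram–Schmidt its matrix is both upper
Hessenberg and symmetric, i.e. a Jacobi matrix `J`. As `‖1‖² = m 0 = 1`, the first basis vector
is `1`; hence the coordinates of `X ^ N` in that basis are `J ^ N δ₀`, the `0`-th one being
`⟪X ^ N, 1⟫ = m N`.
-/

open Polynomial Submodule InnerProductSpace RealInnerProductSpace

def jacobiAction (a b : ℕ → ℝ) (v : ℕ → ℝ) (n : ℕ) : ℝ :=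
  (if n = 0 then 0 else a (n - 1) * v (n - 1)) + b n * v n + a n * v (n + 1)

section JacobiMatrix

variable {E : Type*} [NormedAddCommGroup E] [InnerProductSpace ℝ E] {e : ℕ → E}

theorem Orthonormal.inner_eq_zero_of_mem_span_image (he : Orthonormal ℝ e) {s : Set ℕ} {v : E}
    (hv : v ∈ span ℝ (e '' s)) {k : ℕ} (hk : k ∉ s) : ⟪v, e k⟫ = 0 := by
  obtain ⟨l, hl, rfl⟩ := (Finsupp.mem_span_image_iff_linearCombination ℝ).mp hv
  exact he.inner_finsupp_eq_zero hk hl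

theorem Orthonormal.sum_inner_smul_eq_of_mem_span_image (he : Orthonormal ℝ e) {s : Finset ℕ}
    {v : E} (hv : v ∈ span ℝ (e '' s)) : ∑ k ∈ s, ⟪e k, v⟫ • e k = v := by
  obtain ⟨l, hl, rfl⟩ := (Finsupp.mem_span_image_iff_linearCombination ℝ).mp hv
  simp only [he.inner_right_finsupp]
  exact (Finsupp.sum_of_support_subset l ((Finsupp.mem_supported ℝ l).mp hl) (fun k a => a • e k)
    fun _ _ => zero_smul ℝ _).symm

variable {A : E →ₗ[ℝ] E} (hA : ∀ u v, ⟪A u, v⟫ = ⟪u, A v⟫)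
  (he : Orthonormal ℝ e) (hHess : ∀ n, A (e n) ∈ span ℝ (e '' Set.Iic (n + 1)))
include hA he hHess

-- Symmetry turns the Hessenberg condition `hHess` into tridiagonality.
theorem inner_apply_eq_zero_of_succ_lt {k n : ℕ} (hkn : k + 1 < n) : ⟪e k, A (e n)⟫ = 0 := by
  rw [← hA]
  exact he.inner_eq_zero_of_mem_span_image (hHess k) (by simpa using hkn)

theorem inner_apply_eq_jacobiAction (v : E) (n : ℕ) :
    ⟪v, A (e n)⟫ = jacobiAction (fun k => ⟪e (k + 1), A (e k)⟫) (fun k => ⟪e k, A (e k)⟫)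
      (fun k => ⟪v, e k⟫) n := by
  have hexp : A (e n) = ∑ k ∈ Finset.range (n + 1 + 1), ⟪e k, A (e n)⟫ • e k := by
    refine (he.sum_inner_smul_eq_of_mem_span_image ?_).symm
    rw [Finset.coe_range, Set.Iio_add_one_eq_Iic]
    exact hHess n
  rw [hexp, inner_sum]
  simp only [real_inner_smul_right]
  cases n with
  | zero => simp [jacobiAction, Finset.sum_range_succ, mul_comm]
  | succ n =>
    rw [Finset.sum_range_succ, Finset.sum_range_succ, Finset.sum_range_succ,
      Finset.sum_eq_zero fun k hk => by
        rw [inner_apply_eq_zero_of_succ_lt hA he hHess (by simpa using hk), zero_mul]]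
    have hsub : ⟪e n, A (e (n + 1))⟫ = ⟪e (n + 1), A (e n)⟫ := by
      rw [← hA, real_inner_comm]
    simp only [jacobiAction, Nat.add_one_ne_zero, if_false, Nat.add_sub_cancel, hsub, zero_add]

theorem inner_pow_apply_eq_iterate_jacobiAction (x : E) (N n : ℕ) :
    ⟪(A ^ N) x, e n⟫ =
      (jacobiAction (fun k => ⟪e (k + 1), A (e k)⟫) (fun k => ⟪e k, A (e k)⟫))^[N]
        (fun k => ⟪x, e k⟫) n := by
  induction N generalizing n with
  | zero => rfl
  | succ N ih =>
    rw [pow_succ', Module.End.mul_apply, hA, inner_apply_eq_jacobiAction hA he hHess,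
      Function.iterate_succ_apply']
    simp only [ih]

end JacobiMatrix

section Krylov

variable {E : Type*} [NormedAddCommGroup E] [InnerProductSpace ℝ E] (A : E →ₗ[ℝ] E) (x : E)

theorem apply_gramSchmidtNormed_pow_mem_span (n : ℕ) :
    A (gramSchmidtNormed ℝ (fun k => (A ^ k) x) n) ∈
      span ℝ (gramSchmidtNormed ℝ (fun k => (A ^ k) x) '' Set.Iic (n + 1)) := by
  set f : ℕ → E := fun k => (A ^ k) x
  have hspan (i : ℕ) : span ℝ (gramSchmidtNormed ℝ f '' Set.Iic i) = span ℝ (f '' Set.Iic i) := by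
    rw [span_gramSchmidtNormed, span_gramSchmidt_Iic]
  have hn : gramSchmidtNormed ℝ f n ∈ span ℝ (f '' Set.Iic n) :=
    hspan n ▸ subset_span ⟨n, Set.mem_Iic.mpr le_rfl, rfl⟩
  rw [hspan]
  refine span_mono ?_ (apply_mem_span_image_of_mem_span A hn)
  rintro _ ⟨_, ⟨k, hk, rfl⟩, rfl⟩
  exact ⟨k + 1, Nat.succ_le_succ hk, by simp only [f, pow_succ', Module.End.mul_apply]⟩

theorem exists_inner_pow_apply_eq_iterate_jacobiAction (hA : ∀ u v, ⟪A u, v⟫ = ⟪u, A v⟫)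
    (hx : ‖x‖ = 1) (hli : LinearIndependent ℝ fun k => (A ^ k) x) :
    ∃ a b : ℕ → ℝ, ∀ N, ⟪(A ^ N) x, x⟫ =
      (jacobiAction a b)^[N] (fun n => if n = 0 then 1 else 0) 0 := by
  set e := gramSchmidtNormed ℝ fun k => (A ^ k) x
  have he : Orthonormal ℝ e := gramSchmidtNormed_orthonormal hli
  have he0 : e 0 = x := by
    have h0 : gramSchmidt ℝ (fun k => (A ^ k) x) 0 = x := gramSchmidt_bot ℝ _
    simp [e, gramSchmidtNormed, h0, hx]
  have hdelta : (fun n => ⟪x, e n⟫) = fun n => if n = 0 then 1 else 0 := by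
    funext n
    rw [← he0, orthonormal_iff_ite.mp he]
    exact if_congr eq_comm rfl rfl
  refine ⟨fun k => ⟪e (k + 1), A (e k)⟫, fun k => ⟪e k, A (e k)⟫, fun N => ?_⟩
  rw [← hdelta, ← inner_pow_apply_eq_iterate_jacobiAction hA he
    (apply_gramSchmidtNormed_pow_mem_span A x), he0]

end Krylov

namespace Polynomial

noncomputable def momentFunctional (m : ℕ → ℝ) : ℝ[X] →ₗ[ℝ] ℝ :=
  lsum fun n => m n • LinearMap.id

variable {m : ℕ → ℝ}

theorem momentFunctional_monomial (n : ℕ) (c : ℝ) :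
    momentFunctional m (monomial n c) = m n * c := by
  simp [momentFunctional, sum_monomial_index]

theorem momentFunctional_X_pow (n : ℕ) : momentFunctional m (X ^ n) = m n := by
  rw [X_pow_eq_monomial, momentFunctional_monomial, mul_one]

theorem momentFunctional_mul_self (p : ℝ[X]) :
    momentFunctional m (p * p) =
      ∑ i ∈ p.support, ∑ j ∈ p.support, p.coeff i * m (i + j) * p.coeff j := by
  rw [mul_eq_sum_sum, map_sum]
  refine Finset.sum_congr rfl fun i _ => ?_
  rw [sum_def, map_sum]
  refine Finset.sum_congr rfl fun j _ => ?_
  rw [momentFunctional_monomial]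
  ring

theorem momentFunctional_mul_self_pos
    (hpd : ∀ c : ℕ →₀ ℝ, c ≠ 0 →
      0 < ∑ i ∈ c.support, ∑ j ∈ c.support, c i * m (i + j) * c j)
    {p : ℝ[X]} (hp : p ≠ 0) : 0 < momentFunctional m (p * p) := by
  have hc : p.toFinsupp.coeff ≠ 0 := by simpa using hp
  simpa only [momentFunctional_mul_self, support_toFinsupp, toFinsupp_apply] using hpd _ hc

@[reducible] noncomputable def momentInnerProductCore (m : ℕ → ℝ)
    (hpos : ∀ p : ℝ[X], p ≠ 0 → 0 < momentFunctional m (p * p)) :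
    InnerProductSpace.Core ℝ ℝ[X] where
  inner p q := momentFunctional m (p * q)
  conj_inner_symm p q := by simp [mul_comm]
  re_inner_nonneg p := by
    rcases eq_or_ne p 0 with rfl | hp
    · simp
    · exact (hpos p hp).le
  add_left p q r := by simp [add_mul]
  smul_left p q c := by simp
  definite p h := by
    by_contra hp
    exact (hpos p hp).ne' h

end Polynomial

/-- **Every normalized positive definite Hankel matrix is of `T`-class with `T` a
symmetric tridiagonal (Jacobi) matrix.** There exist real sequences `a`, `b` such
that, for the tridiagonal action `(Tv)_n = a_{n-1} v_{n-1} + b_n v_n + a_n v_{n+1}`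
(with the convention `a_{-1} v_{-1} = 0`), one has
`M_{j,k} = m (j+k) = (T^{j+k} δ₀)(0)` for all `j, k`. -/
theorem hankel_is_T_class (m : ℕ → ℝ) (hm0 : m 0 = 1)
    (hpd : ∀ c : ℕ →₀ ℝ, c ≠ 0 →
      0 < ∑ i ∈ c.support, ∑ j ∈ c.support, c i * m (i + j) * c j) :
    ∃ a b : ℕ → ℝ,
      ∀ j k : ℕ,
        m (j + k) =
        ((fun v : ℕ → ℝ => fun n : ℕ =>
            (if n = 0 then 0 else a (n - 1) * v (n - 1)) + b n * v n +
              a n * v (n + 1))^[j + k]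
          (fun n : ℕ => if n = 0 then (1 : ℝ) else 0)) 0 := by
  let core := momentInnerProductCore m fun _ => momentFunctional_mul_self_pos hpd
  let _ := core.toNormedAddCommGroup
  let _ := InnerProductSpace.ofCore core.toCore
  have hinner (p q : ℝ[X]) : ⟪p, q⟫ = momentFunctional m (p * q) := rfl
  have hpow (N : ℕ) : (LinearMap.mulLeft ℝ (X : ℝ[X]) ^ N) 1 = X ^ N := by
    rw [LinearMap.pow_mulLeft, LinearMap.mulLeft_apply, mul_one]
  have hX (p q : ℝ[X]) : ⟪LinearMap.mulLeft ℝ X p, q⟫ = ⟪p, LinearMap.mulLeft ℝ X q⟫ := by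
    rw [hinner, hinner, LinearMap.mulLeft_apply, LinearMap.mulLeft_apply, mul_assoc, mul_left_comm]
  have hone : ‖(1 : ℝ[X])‖ = 1 := by
    rw [norm_eq_sqrt_real_inner, hinner, mul_one, ← pow_zero X, momentFunctional_X_pow, hm0,
      Real.sqrt_one]
  have hli : LinearIndependent ℝ fun N => (LinearMap.mulLeft ℝ (X : ℝ[X]) ^ N) 1 := by
    simpa only [hpow, X_pow_eq_monomial, ← coe_basisMonomials] using
      (basisMonomials ℝ).linearIndependent
  obtain ⟨a, b, hab⟩ := exists_inner_pow_apply_eq_iterate_jacobiAction _ _ hX hone hli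
  refine ⟨a, b, fun j k => Eq.trans ?_ (hab (j + k))⟩
  rw [hpow, hinner, mul_one, momentFunctional_X_pow]
end
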